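/- arXiv:1804.00740 — 4 statements merged into one kernel-verified Lean document; each statement's English description precedes it below -/
import Mathlib

section
/- Let φₙ : S¹ → ℝ² be continuous injective maps converging uniformly to a continuous injective map φ : S¹ → ℝ². For each n let Γₙ = {σ ∈ Σ : (φₙ(σ₀), φₙ(σ₁), φₙ(σ₂), φₙ(σ₃)) is a labeled rectangle}. Then for each fixed K ≥ 1 there is a compact set C(K) ⊆ Σ (compact as a subset of (S¹)⁴ and contained in Σ) such that Γₙ ∩ Λ⁻¹([1/K, K]) ⊆ C(K) for all n. -/
open Set Filter

noncomputable section

abbrev S1 : Type := ↥(Metric.sphere (0 : ℂ) 1)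

def expMap (t : ℝ) : S1 :=
  ⟨Complex.exp (t * Complex.I), by
    simp [Metric.mem_sphere, Complex.dist_eq, Complex.norm_exp_ofReal_mul_I]⟩

def CCW4 (s : Fin 4 → S1) : Prop :=
  ∃ θ : Fin 4 → ℝ,
    (∀ k, (s k : ℂ) = Complex.exp (θ k * Complex.I)) ∧
    θ 0 < θ 1 ∧ θ 1 < θ 2 ∧ θ 2 < θ 3 ∧ θ 3 < θ 0 + 2 * Real.pi

def CCW3 (s : Fin 3 → S1) : Prop :=
  ∃ θ : Fin 3 → ℝ,
    (∀ k, (s k : ℂ) = Complex.exp (θ k * Complex.I)) ∧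
    θ 0 < θ 1 ∧ θ 1 < θ 2 ∧ θ 2 < θ 0 + 2 * Real.pi

def IsLabeledRect (R : Fin 4 → ℂ) : Prop :=
  R 1 ≠ R 0 ∧ ∃ r : ℝ, 0 < r ∧
    R 2 - R 1 = Complex.I * r * (R 1 - R 0) ∧ R 3 = R 0 + (R 2 - R 1)

def aspect (R : Fin 4 → ℂ) : ℝ := ‖R 2 - R 1‖ / ‖R 1 - R 0‖
def rectArea (R : Fin 4 → ℂ) : ℝ := ‖R 1 - R 0‖ * ‖R 2 - R 1‖
def rectDiam (R : Fin 4 → ℂ) : ℝ := ‖R 2 - R 0‖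

def inscribed (γ : Set ℂ) : Set (Fin 4 → ℂ) := {R | IsLabeledRect R ∧ ∀ k, R k ∈ γ}

def Graceful (φ : S1 → ℂ) (R : Fin 4 → ℂ) : Prop :=
  ∃ s : Fin 4 → S1, CCW4 s ∧ ∀ k, φ (s k) = R k

def gracefulRects (φ : S1 → ℂ) : Set (Fin 4 → ℂ) :=
  {R | R ∈ inscribed (Set.range φ) ∧ Graceful φ R}

def vertexSet (S : Set (Fin 4 → ℂ)) : Set ℂ := {p | ∃ R ∈ S, ∃ k, R k = p}
def aspectSet (S : Set (Fin 4 → ℂ)) : Set ℝ := aspect '' S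

def relabel (R : Fin 4 → ℂ) : Fin 4 → ℂ := fun k => R (k + 1)

def WindsOnce (φ : S1 → ℂ) (p : ℂ) : Prop :=
  ∃ a : ℝ → ℝ, Continuous a ∧ a (2 * Real.pi) = a 0 + 2 * Real.pi ∧
    ∀ t : ℝ, φ (expMap t) - p =
      ((‖φ (expMap t) - p‖ : ℝ) : ℂ) * Complex.exp (a t * Complex.I)

def IsCCWJordan (φ : S1 → ℂ) : Prop :=
  Continuous φ ∧ Function.Injective φ ∧
  ∀ p : ℂ, p ∉ Set.range φ →
    Bornology.IsBounded (connectedComponentIn (Set.range φ)ᶜ p) →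
    WindsOnce φ p

def IsPolygon (γ : Set ℂ) : Prop :=
  ∃ (n : ℕ) (a b : Fin n → ℂ), γ = ⋃ i, segment ℝ (a i) (b i)

def ccwArc (x y : ℂ) : ℝ :=
  if 0 ≤ Complex.arg (y / x) then Complex.arg (y / x)
  else Complex.arg (y / x) + 2 * Real.pi

def Lam (σ : Fin 4 → S1) : ℝ :=
  (ccwArc (σ 0 : ℂ) (σ 1 : ℂ) + ccwArc (σ 2 : ℂ) (σ 3 : ℂ)) /
  (ccwArc (σ 1 : ℂ) (σ 2 : ℂ) + ccwArc (σ 3 : ℂ) (σ 0 : ℂ))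

def ccwArcSet (x y : S1) : Set S1 :=
  {z | ccwArc (x : ℂ) (z : ℂ) ≤ ccwArc (x : ℂ) (y : ℂ)}

def signedArea (p q r : ℂ) : ℝ :=
  ((q - p).re * (r - p).im - (q - p).im * (r - p).re) / 2

def NonzeroWinding (f : ℝ → S1) : Prop :=
  ∃ a : ℝ → ℝ, ContinuousOn a (Set.Icc 0 1) ∧
    (∀ t ∈ Set.Icc (0:ℝ) 1, (f t : ℂ) = Complex.exp (a t * Complex.I)) ∧
    ∃ m : ℤ, m ≠ 0 ∧ a 1 - a 0 = 2 * Real.pi * m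

def SimpleQuad (P : Fin 4 → ℂ) : Prop :=
  Function.Injective P ∧
  (∀ k : Fin 4, segment ℝ (P k) (P (k + 1)) ∩ segment ℝ (P (k + 1)) (P (k + 2)) = {P (k + 1)}) ∧
  (∀ k : Fin 4, segment ℝ (P k) (P (k + 1)) ∩ segment ℝ (P (k + 2)) (P (k + 3)) = ∅)

def shoelace (P : Fin 4 → ℂ) : ℝ :=
  (∑ k : Fin 4, ((P k).re * (P (k + 1)).im - (P (k + 1)).re * (P k).im)) / 2

def DegenChord (ζ : Fin 4 → ℂ) : Prop :=
  ∃ z w : ℂ, z ≠ w ∧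
    (ζ = ![z, z, w, w] ∨ ζ = ![w, z, z, w] ∨ ζ = ![w, w, z, z] ∨ ζ = ![z, w, w, z])

-- ===== auxiliary lemmas for `precompact` =====

lemma abs_sin_le_abs' (x : ℝ) : |Real.sin x| ≤ |x| := by
  have h := Real.sin_sq_le_sq (x := x)
  rw [← _root_.sq_abs (Real.sin x), ← _root_.sq_abs x] at h
  exact (pow_le_pow_iff_left₀ (abs_nonneg _) (abs_nonneg _) (by norm_num)).mp h

lemma chord_eq_aux (t : ℝ) :
    ‖Complex.exp (t * Complex.I) - 1‖ = 2 * |Real.sin (t/2)| := by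
  rw [Complex.exp_mul_I]
  have h1 : Complex.cos t + Complex.sin t * Complex.I - 1
      = Complex.ofReal (Real.cos t - 1) + Complex.ofReal (Real.sin t) * Complex.I := by
    push_cast; ring
  rw [h1, Complex.norm_def, Complex.normSq_add_mul_I]
  have hc : Real.cos t = Real.cos (t/2)^2 - Real.sin (t/2)^2 := by
    rw [← Real.cos_two_mul']; ring_nf
  have hs : Real.sin t = 2 * Real.sin (t/2) * Real.cos (t/2) := by
    rw [← Real.sin_two_mul]; ring_nf
  have h2 : (2*|Real.sin (t/2)|)^2 = 4 * Real.sin (t/2)^2 := by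
    rw [mul_pow, _root_.sq_abs]; ring
  have h : (Real.cos t - 1)^2 + (Real.sin t)^2 = (2 * |Real.sin (t/2)|)^2 := by
    rw [hc, hs, h2]
    nlinarith [Real.sin_sq_add_cos_sq (t/2)]
  rw [h, Real.sqrt_sq (by positivity)]

lemma chord_eq'_aux (a b : ℝ) :
    ‖Complex.exp (b * Complex.I) - Complex.exp (a * Complex.I)‖
      = 2 * |Real.sin ((b - a)/2)| := by
  have h : Complex.exp ((b:ℂ) * Complex.I) - Complex.exp ((a:ℂ) * Complex.I)
      = Complex.exp ((a:ℂ) * Complex.I) * (Complex.exp (((b - a : ℝ) : ℂ) * Complex.I) - 1) := by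
    rw [mul_sub, ← Complex.exp_add]; push_cast; ring_nf
  rw [h, norm_mul, Complex.norm_exp_ofReal_mul_I, one_mul, chord_eq_aux]

lemma chord_le_arc (a b : ℝ) :
    ‖Complex.exp (b * Complex.I) - Complex.exp (a * Complex.I)‖ ≤ |b - a| := by
  rw [chord_eq'_aux]
  calc 2 * |Real.sin ((b-a)/2)| ≤ 2 * |(b-a)/2| :=
        mul_le_mul_of_nonneg_left (abs_sin_le_abs' _) (by norm_num)
    _ = |b - a| := by rw [abs_div, _root_.abs_of_nonneg (by norm_num : (0:ℝ) ≤ 2)]; ring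

lemma arc_le_chord (a b : ℝ) (h0 : 0 ≤ b - a) (h2 : b - a ≤ 2 * Real.pi) :
    min (b - a) (2 * Real.pi - (b - a)) ≤
      Real.pi / 2 * ‖Complex.exp (b * Complex.I) - Complex.exp (a * Complex.I)‖ := by
  rw [chord_eq'_aux]
  set t := b - a with ht
  have hpi := Real.pi_pos
  rcases le_total t Real.pi with h | h
  · have hs : 2/Real.pi * (t/2) ≤ Real.sin (t/2) := Real.mul_le_sin (by linarith) (by linarith)
    have hsn : 0 ≤ Real.sin (t/2) := Real.sin_nonneg_of_nonneg_of_le_pi (by linarith) (by linarith)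
    rw [_root_.abs_of_nonneg hsn]
    have hle : t ≤ Real.pi / 2 * (2 * Real.sin (t/2)) := by
      calc t = Real.pi * (2/Real.pi * (t/2)) := by field_simp
        _ ≤ Real.pi * Real.sin (t/2) := by gcongr
        _ = Real.pi / 2 * (2 * Real.sin (t/2)) := by ring
    exact le_trans (min_le_left _ _) hle
  · have hs' : Real.sin (t/2) = Real.sin ((2*Real.pi - t)/2) := by
      have he : (2*Real.pi - t)/2 = Real.pi - t/2 := by ring
      rw [he, Real.sin_pi_sub]
    have hs : 2/Real.pi * ((2*Real.pi - t)/2) ≤ Real.sin ((2*Real.pi - t)/2) :=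
      Real.mul_le_sin (by linarith) (by linarith)
    have hsn : 0 ≤ Real.sin ((2*Real.pi - t)/2) :=
      Real.sin_nonneg_of_nonneg_of_le_pi (by linarith) (by linarith)
    rw [hs', _root_.abs_of_nonneg hsn]
    have hle : 2*Real.pi - t ≤ Real.pi / 2 * (2 * Real.sin ((2*Real.pi - t)/2)) := by
      calc 2*Real.pi - t = Real.pi * (2/Real.pi * ((2*Real.pi - t)/2)) := by field_simp
        _ ≤ Real.pi * Real.sin ((2*Real.pi - t)/2) := by gcongr
        _ = Real.pi / 2 * (2 * Real.sin ((2*Real.pi - t)/2)) := by ring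
    exact le_trans (min_le_right _ _) hle

lemma ccwArc_exp {a b : ℝ} (h1 : 0 < b - a) (h2 : b - a < 2*Real.pi) :
    ccwArc (Complex.exp (a*Complex.I)) (Complex.exp (b*Complex.I)) = b - a := by
  have hdiv : Complex.exp ((b:ℂ)*Complex.I) / Complex.exp ((a:ℂ)*Complex.I)
      = Complex.exp (((b-a:ℝ):ℂ)*Complex.I) := by
    rw [← Complex.exp_sub]; push_cast; ring_nf
  unfold ccwArc
  rw [hdiv]
  have hpi := Real.pi_pos
  rcases le_or_gt (b-a) Real.pi with h | h
  · have harg : (Complex.exp (((b-a:ℝ):ℂ)*Complex.I)).arg = b - a := by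
      rw [Complex.exp_mul_I]
      exact Complex.arg_cos_add_sin_mul_I ⟨by linarith, h⟩
    rw [harg, if_pos (le_of_lt h1)]
  · have he : Complex.exp (((b-a:ℝ):ℂ)*Complex.I)
        = Complex.exp (((b-a-2*Real.pi:ℝ):ℂ)*Complex.I) := by
      rw [show (((b-a:ℝ)):ℂ) * Complex.I
          = ((b-a-2*Real.pi:ℝ):ℂ)*Complex.I + 2*(Real.pi:ℂ)*Complex.I by push_cast; ring,
        Complex.exp_add, Complex.exp_two_pi_mul_I, mul_one]
    have harg : (Complex.exp (((b-a:ℝ):ℂ)*Complex.I)).arg = b - a - 2*Real.pi := by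
      rw [he, Complex.exp_mul_I]
      exact Complex.arg_cos_add_sin_mul_I ⟨by linarith, by linarith⟩
    rw [harg, if_neg (by linarith)]
    ring

lemma inj_expansive (g : S1 → ℂ) (hc : Continuous g) (hi : Function.Injective g)
    {η : ℝ} (hη : 0 < η) : ∃ δ > 0, ∀ x y : S1, dist (g x) (g y) < δ → dist x y < η := by
  set Kc : Set (S1 × S1) := {p | η ≤ dist p.1 p.2} with hKc
  have hclosed : IsClosed Kc := isClosed_le continuous_const (continuous_fst.dist continuous_snd)
  have hcomp : IsCompact Kc := hclosed.isCompact
  rcases Kc.eq_empty_or_nonempty with he | hne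
  · refine ⟨1, one_pos, fun x y _ => ?_⟩
    by_contra hxy
    exact absurd he (Set.nonempty_iff_ne_empty.mp ⟨(x, y), not_lt.mp hxy⟩)
  · obtain ⟨p₀, hp₀, hmin⟩ := hcomp.exists_isMinOn hne
      ((hc.comp continuous_fst).dist (hc.comp continuous_snd)).continuousOn
    have hne' : p₀.1 ≠ p₀.2 := by
      intro h
      have : (0:ℝ) < dist p₀.1 p₀.2 := lt_of_lt_of_le hη hp₀
      rw [h, dist_self] at this; exact lt_irrefl _ this
    have hpos : 0 < dist (g p₀.1) (g p₀.2) := dist_pos.mpr fun h => hne' (hi h)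
    refine ⟨_, hpos, fun x y hxy => ?_⟩
    by_contra hc'
    have hmem : (x, y) ∈ Kc := not_lt.mp hc'
    exact absurd (hmin hmem) (not_le.mpr hxy)

lemma uniform_inj (φn : ℕ → S1 → ℂ) (φ : S1 → ℂ)
    (hcont : ∀ n, Continuous (φn n)) (hinj : ∀ n, Function.Injective (φn n))
    (hφc : Continuous φ) (hφi : Function.Injective φ)
    (hunif : TendstoUniformly φn φ Filter.atTop)
    {η : ℝ} (hη : 0 < η) :
    ∃ δ > 0, ∀ n, ∀ x y : S1, dist (φn n x) (φn n y) < δ → dist x y < η := by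
  obtain ⟨δφ, hδφ, hφ⟩ := inj_expansive φ hφc hφi hη
  obtain ⟨N, hN⟩ :=
    (Metric.tendstoUniformly_iff.mp hunif (δφ/3) (by linarith)).exists_forall_of_atTop
  choose d hd hdp using fun n => inj_expansive (φn n) (hcont n) (hinj n) hη
  set s : Finset ℝ := insert (δφ/3) ((Finset.range N).image d) with hs
  have hsne : s.Nonempty := ⟨δφ/3, Finset.mem_insert_self _ _⟩
  refine ⟨s.min' hsne, ?_, ?_⟩
  · have hmm := s.min'_mem hsne
    rcases Finset.mem_insert.mp hmm with h | h
    · rw [h]; linarith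
    · obtain ⟨n, _, hn⟩ := Finset.mem_image.mp h
      rw [← hn]; exact hd n
  · intro n x y hxy
    rcases lt_or_ge n N with h | h
    · exact hdp n x y (lt_of_lt_of_le hxy (Finset.min'_le _ _
        (Finset.mem_insert_of_mem (Finset.mem_image_of_mem d (Finset.mem_range.mpr h)))))
    · have h1 := hN n h x
      have h2 := hN n h y
      have hm : s.min' hsne ≤ δφ/3 := Finset.min'_le _ _ (Finset.mem_insert_self _ _)
      apply hφ x y
      calc dist (φ x) (φ y)
          ≤ dist (φ x) (φn n x) + dist (φn n x) (φn n y) + dist (φn n y) (φ y) :=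
            dist_triangle4 _ _ _ _
        _ < δφ/3 + δφ/3 + δφ/3 := by
            apply add_lt_add (add_lt_add h1 (lt_of_lt_of_le hxy hm))
            rw [dist_comm]; exact h2
        _ = δφ := by ring

lemma cont_small (g : S1 → ℂ) (hc : Continuous g) {δ : ℝ} (hδ : 0 < δ) :
    ∃ ε > 0, ∀ x y : S1, dist x y < ε → dist (g x) (g y) < δ := by
  have hu : UniformContinuous g := CompactSpace.uniformContinuous_of_continuous hc
  obtain ⟨ε, hε, h⟩ := Metric.uniformContinuous_iff.mp hu δ hδ
  exact ⟨ε, hε, fun x y hxy => h hxy⟩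

lemma uniform_equicont (φn : ℕ → S1 → ℂ) (φ : S1 → ℂ)
    (hcont : ∀ n, Continuous (φn n)) (hφc : Continuous φ)
    (hunif : TendstoUniformly φn φ Filter.atTop)
    {δ : ℝ} (hδ : 0 < δ) :
    ∃ ε > 0, ∀ n, ∀ x y : S1, dist x y < ε → dist (φn n x) (φn n y) < δ := by
  obtain ⟨εφ, hεφ, hφ⟩ := cont_small φ hφc (show (0:ℝ) < δ/3 by linarith)
  obtain ⟨N, hN⟩ :=
    (Metric.tendstoUniformly_iff.mp hunif (δ/3) (by linarith)).exists_forall_of_atTop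
  choose e he hep using fun n => cont_small (φn n) (hcont n) hδ
  set s : Finset ℝ := insert εφ ((Finset.range N).image e) with hs
  have hsne : s.Nonempty := ⟨εφ, Finset.mem_insert_self _ _⟩
  refine ⟨s.min' hsne, ?_, ?_⟩
  · rcases Finset.mem_insert.mp (s.min'_mem hsne) with h | h
    · rw [h]; exact hεφ
    · obtain ⟨n, _, hn⟩ := Finset.mem_image.mp h
      rw [← hn]; exact he n
  · intro n x y hxy
    rcases lt_or_ge n N with h | h
    · exact hep n x y (lt_of_lt_of_le hxy (Finset.min'_le _ _
        (Finset.mem_insert_of_mem (Finset.mem_image_of_mem e (Finset.mem_range.mpr h)))))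
    · have h1 := hN n h x
      have h2 := hN n h y
      have hm : s.min' hsne ≤ εφ := Finset.min'_le _ _ (Finset.mem_insert_self _ _)
      calc dist (φn n x) (φn n y)
          ≤ dist (φn n x) (φ x) + dist (φ x) (φ y) + dist (φ y) (φn n y) := dist_triangle4 _ _ _ _
        _ < δ/3 + δ/3 + δ/3 := by
            apply add_lt_add (add_lt_add _ (hφ x y (lt_of_lt_of_le hxy hm))) h2
            rw [dist_comm]; exact h1
        _ = δ := by ring
set_option maxHeartbeats 1000000

theorem precompact (φn : ℕ → S1 → ℂ) (φ : S1 → ℂ)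
    (hcont : ∀ n, Continuous (φn n)) (hinj : ∀ n, Function.Injective (φn n))
    (hφc : Continuous φ) (hφi : Function.Injective φ)
    (hunif : TendstoUniformly φn φ Filter.atTop)
    (K : ℝ) (hK : 1 ≤ K) :
    ∃ C : Set (Fin 4 → S1), IsCompact C ∧ (∀ σ ∈ C, CCW4 σ) ∧
      ∀ n, {σ : Fin 4 → S1 | CCW4 σ ∧ IsLabeledRect (fun k => φn n (σ k)) ∧
        Lam σ ∈ Set.Icc (1/K) K} ⊆ C := by
  have hpi := Real.pi_pos
  have hK0 : (0:ℝ) < K := lt_of_lt_of_le one_pos hK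
  set c : ℝ := 2*Real.pi/(K+1) with hcdef
  have hcpos : 0 < c := by positivity
  obtain ⟨δ, hδ, hA⟩ := uniform_inj φn φ hcont hinj hφc hφi hunif
    (show (0:ℝ) < c/(2*Real.pi) by positivity)
  obtain ⟨ε₁, hε₁, hB⟩ := uniform_equicont φn φ hcont hφc hunif hδ
  set ε : ℝ := min ε₁ (c/4) with hεdef
  have hεpos : 0 < ε := lt_min hε₁ (by positivity)
  have hεc : ε ≤ c/4 := min_le_right _ _
  have hεε₁ : ε ≤ ε₁ := min_le_left _ _
  set T : Set (Fin 4 → ℝ) := {θ | (0 ≤ θ 0 ∧ θ 0 ≤ 2*Real.pi) ∧ θ 0 + ε ≤ θ 1 ∧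
    θ 1 + ε ≤ θ 2 ∧ θ 2 + ε ≤ θ 3 ∧ θ 3 + ε ≤ θ 0 + 2*Real.pi} with hTdef
  have hTclosed : IsClosed T := by
    rw [hTdef]
    simp only [Set.setOf_and]
    exact ((isClosed_le continuous_const (continuous_apply 0)).inter
        (isClosed_le (continuous_apply 0) continuous_const)).inter
      ((isClosed_le ((continuous_apply 0).add continuous_const) (continuous_apply 1)).inter
        ((isClosed_le ((continuous_apply 1).add continuous_const) (continuous_apply 2)).inter
          ((isClosed_le ((continuous_apply 2).add continuous_const) (continuous_apply 3)).inter
            (isClosed_le ((continuous_apply 3).add continuous_const)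
              ((continuous_apply 0).add continuous_const)))))
  have hTsub : T ⊆ Set.Icc (fun _ => (0:ℝ)) (fun _ => 4*Real.pi) := by
    rintro θ ⟨⟨h1, h2⟩, h3, h4, h5, h6⟩
    rw [Set.mem_Icc]
    constructor
    · intro k
      fin_cases k
      · exact (show (0:ℝ) ≤ θ 0 by linarith)
      · exact (show (0:ℝ) ≤ θ 1 by linarith)
      · exact (show (0:ℝ) ≤ θ 2 by linarith)
      · exact (show (0:ℝ) ≤ θ 3 by linarith)
    · intro k
      fin_cases k
      · exact (show θ 0 ≤ 4*Real.pi by linarith)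
      · exact (show θ 1 ≤ 4*Real.pi by linarith)
      · exact (show θ 2 ≤ 4*Real.pi by linarith)
      · exact (show θ 3 ≤ 4*Real.pi by linarith)
  have hTcomp : IsCompact T := IsCompact.of_isClosed_subset isCompact_Icc hTclosed hTsub
  have hexpc : Continuous expMap :=
    Continuous.subtype_mk (Complex.continuous_exp.comp
      (Complex.continuous_ofReal.mul continuous_const)) _
  have hmapc : Continuous (fun θ : Fin 4 → ℝ => fun k : Fin 4 => expMap (θ k)) :=
    continuous_pi fun k => hexpc.comp (continuous_apply k)
  refine ⟨(fun θ : Fin 4 → ℝ => fun k : Fin 4 => expMap (θ k)) '' T, hTcomp.image hmapc, ?_, ?_⟩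
  · rintro σ ⟨θ, hθT, rfl⟩
    obtain ⟨⟨ha, hb⟩, h1, h2, h3, h4⟩ := hθT
    exact ⟨θ, fun k => rfl, by linarith, by linarith, by linarith, by linarith⟩
  · intro n σ hmem
    obtain ⟨⟨θ, hθ, h01, h12, h23, h30⟩, hrect, hLam⟩ := hmem
    rw [Set.mem_Icc] at hLam
    obtain ⟨hL1, hL2⟩ := hLam
    set m : ℤ := ⌊θ 0 / (2*Real.pi)⌋ with hm
    set θ' : Fin 4 → ℝ := fun k => θ k - 2*Real.pi*m with hθ'def
    have hv0 : θ' 0 = θ 0 - 2*Real.pi*m := rfl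
    have hv1 : θ' 1 = θ 1 - 2*Real.pi*m := rfl
    have hv2 : θ' 2 = θ 2 - 2*Real.pi*m := rfl
    have hv3 : θ' 3 = θ 3 - 2*Real.pi*m := rfl
    have hσ : ∀ k, (σ k : ℂ) = Complex.exp ((θ' k : ℝ) * Complex.I) := by
      intro k
      rw [hθ k,
        show ((θ k : ℝ):ℂ) * Complex.I
          = ((θ' k : ℝ):ℂ)*Complex.I + (m:ℂ)*(2*(Real.pi:ℂ)*Complex.I) by
          simp only [hθ'def]; push_cast; ring,
        Complex.exp_add, Complex.exp_int_mul_two_pi_mul_I, mul_one]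
    have hf1 : (m:ℝ) ≤ θ 0/(2*Real.pi) := Int.floor_le _
    have hf2 : θ 0/(2*Real.pi) < m + 1 := Int.lt_floor_add_one _
    rw [le_div_iff₀ (by linarith)] at hf1
    rw [div_lt_iff₀ (by linarith)] at hf2
    have h0a : 0 ≤ θ' 0 := by rw [hv0]; linarith
    have h0b : θ' 0 ≤ 2*Real.pi := by rw [hv0]; linarith
    -- ccwArc values
    have hA0 : ccwArc (σ 0 : ℂ) (σ 1 : ℂ) = θ' 1 - θ' 0 := by
      rw [hσ 0, hσ 1]; exact ccwArc_exp (by linarith) (by linarith)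
    have hA1 : ccwArc (σ 1 : ℂ) (σ 2 : ℂ) = θ' 2 - θ' 1 := by
      rw [hσ 1, hσ 2]; exact ccwArc_exp (by linarith) (by linarith)
    have hA2 : ccwArc (σ 2 : ℂ) (σ 3 : ℂ) = θ' 3 - θ' 2 := by
      rw [hσ 2, hσ 3]; exact ccwArc_exp (by linarith) (by linarith)
    have hσ0' : (σ 0 : ℂ) = Complex.exp (((θ' 0 + 2*Real.pi : ℝ)) * Complex.I) := by
      rw [hσ 0,
        show (((θ' 0 + 2*Real.pi : ℝ)):ℂ) * Complex.I
          = ((θ' 0 : ℝ):ℂ)*Complex.I + 2*(Real.pi:ℂ)*Complex.I by push_cast; ring,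
        Complex.exp_add, Complex.exp_two_pi_mul_I, mul_one]
    have hA3 : ccwArc (σ 3 : ℂ) (σ 0 : ℂ) = θ' 0 + 2*Real.pi - θ' 3 := by
      rw [hσ 3, hσ0']
      exact ccwArc_exp (by linarith) (by linarith)
    have hLam' : Lam σ = ((θ' 1 - θ' 0) + (θ' 3 - θ' 2)) /
        ((θ' 2 - θ' 1) + (θ' 0 + 2*Real.pi - θ' 3)) := by
      unfold Lam; rw [hA0, hA1, hA2, hA3]
    rw [hLam'] at hL1 hL2
    have hden : 0 < (θ' 2 - θ' 1) + (θ' 0 + 2*Real.pi - θ' 3) := by linarith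
    have hL2' : (θ' 1 - θ' 0) + (θ' 3 - θ' 2)
        ≤ K * ((θ' 2 - θ' 1) + (θ' 0 + 2*Real.pi - θ' 3)) := (div_le_iff₀ hden).mp hL2
    have hL1' : (1/K) * ((θ' 2 - θ' 1) + (θ' 0 + 2*Real.pi - θ' 3))
        ≤ (θ' 1 - θ' 0) + (θ' 3 - θ' 2) := (le_div_iff₀ hden).mp hL1
    have hden_le : (θ' 2 - θ' 1) + (θ' 0 + 2*Real.pi - θ' 3)
        ≤ K * ((θ' 1 - θ' 0) + (θ' 3 - θ' 2)) := by
      have h := mul_le_mul_of_nonneg_left hL1' (le_of_lt hK0)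
      rwa [show K * ((1/K) * ((θ' 2 - θ' 1) + (θ' 0 + 2*Real.pi - θ' 3)))
          = (θ' 2 - θ' 1) + (θ' 0 + 2*Real.pi - θ' 3) by field_simp] at h
    have hnumc : c ≤ (θ' 1 - θ' 0) + (θ' 3 - θ' 2) := by
      rw [hcdef, div_le_iff₀ (by linarith : (0:ℝ) < K+1)]
      calc 2*Real.pi
          = ((θ' 1 - θ' 0) + (θ' 3 - θ' 2)) + ((θ' 2 - θ' 1) + (θ' 0 + 2*Real.pi - θ' 3)) := by
            ring
        _ ≤ ((θ' 1 - θ' 0) + (θ' 3 - θ' 2)) + K * ((θ' 1 - θ' 0) + (θ' 3 - θ' 2)) := by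
            linarith [hden_le]
        _ = ((θ' 1 - θ' 0) + (θ' 3 - θ' 2)) * (K+1) := by ring
    have hdenc : c ≤ (θ' 2 - θ' 1) + (θ' 0 + 2*Real.pi - θ' 3) := by
      rw [hcdef, div_le_iff₀ (by linarith : (0:ℝ) < K+1)]
      calc 2*Real.pi
          = ((θ' 1 - θ' 0) + (θ' 3 - θ' 2)) + ((θ' 2 - θ' 1) + (θ' 0 + 2*Real.pi - θ' 3)) := by
            ring
        _ ≤ K * ((θ' 2 - θ' 1) + (θ' 0 + 2*Real.pi - θ' 3))
            + ((θ' 2 - θ' 1) + (θ' 0 + 2*Real.pi - θ' 3)) := by linarith [hL2']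
        _ = ((θ' 2 - θ' 1) + (θ' 0 + 2*Real.pi - θ' 3)) * (K+1) := by ring
    -- rectangle side relations
    obtain ⟨-, r, -, -, hR3⟩ := hrect
    simp only at hR3
    have hd23 : dist (φn n (σ 3)) (φn n (σ 2)) = dist (φn n (σ 0)) (φn n (σ 1)) := by
      rw [Complex.dist_eq, Complex.dist_eq]; congr 1; linear_combination hR3
    have hd30 : dist (φn n (σ 3)) (φn n (σ 0)) = dist (φn n (σ 2)) (φn n (σ 1)) := by
      rw [Complex.dist_eq, Complex.dist_eq]; congr 1; linear_combination hR3
    -- chord upper bounds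
    have hch0 : dist (σ 1) (σ 0) ≤ θ' 1 - θ' 0 := by
      rw [Subtype.dist_eq, Complex.dist_eq, hσ 0, hσ 1]
      calc ‖Complex.exp ((θ' 1:ℝ) * Complex.I) - Complex.exp ((θ' 0:ℝ) * Complex.I)‖
          ≤ |θ' 1 - θ' 0| := chord_le_arc _ _
        _ = θ' 1 - θ' 0 := abs_of_nonneg (by linarith)
    have hch1 : dist (σ 2) (σ 1) ≤ θ' 2 - θ' 1 := by
      rw [Subtype.dist_eq, Complex.dist_eq, hσ 1, hσ 2]
      calc ‖Complex.exp ((θ' 2:ℝ) * Complex.I) - Complex.exp ((θ' 1:ℝ) * Complex.I)‖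
          ≤ |θ' 2 - θ' 1| := chord_le_arc _ _
        _ = θ' 2 - θ' 1 := abs_of_nonneg (by linarith)
    have hch2 : dist (σ 3) (σ 2) ≤ θ' 3 - θ' 2 := by
      rw [Subtype.dist_eq, Complex.dist_eq, hσ 2, hσ 3]
      calc ‖Complex.exp ((θ' 3:ℝ) * Complex.I) - Complex.exp ((θ' 2:ℝ) * Complex.I)‖
          ≤ |θ' 3 - θ' 2| := chord_le_arc _ _
        _ = θ' 3 - θ' 2 := abs_of_nonneg (by linarith)
    have hch3 : dist (σ 0) (σ 3) ≤ θ' 0 + 2*Real.pi - θ' 3 := by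
      rw [Subtype.dist_eq, Complex.dist_eq, hσ 3, hσ0']
      calc ‖Complex.exp ((θ' 0 + 2*Real.pi:ℝ) * Complex.I)
            - Complex.exp ((θ' 3:ℝ) * Complex.I)‖
          ≤ |(θ' 0 + 2*Real.pi) - θ' 3| := chord_le_arc _ _
        _ = θ' 0 + 2*Real.pi - θ' 3 := by rw [abs_of_nonneg (by linarith)]
    -- arc lower bounds
    have harc0 : min (θ' 1 - θ' 0) (2*Real.pi - (θ' 1 - θ' 0))
        ≤ Real.pi/2 * dist (σ 1) (σ 0) := by
      rw [Subtype.dist_eq, Complex.dist_eq, hσ 0, hσ 1]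
      exact arc_le_chord _ _ (by linarith) (by linarith)
    have harc1 : min (θ' 2 - θ' 1) (2*Real.pi - (θ' 2 - θ' 1))
        ≤ Real.pi/2 * dist (σ 2) (σ 1) := by
      rw [Subtype.dist_eq, Complex.dist_eq, hσ 1, hσ 2]
      exact arc_le_chord _ _ (by linarith) (by linarith)
    have harc2 : min (θ' 3 - θ' 2) (2*Real.pi - (θ' 3 - θ' 2))
        ≤ Real.pi/2 * dist (σ 3) (σ 2) := by
      rw [Subtype.dist_eq, Complex.dist_eq, hσ 2, hσ 3]
      exact arc_le_chord _ _ (by linarith) (by linarith)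
    have harc3 : min (θ' 0 + 2*Real.pi - θ' 3) (2*Real.pi - (θ' 0 + 2*Real.pi - θ' 3))
        ≤ Real.pi/2 * dist (σ 0) (σ 3) := by
      rw [Subtype.dist_eq, Complex.dist_eq, hσ 3, hσ0']
      have h := arc_le_chord (θ' 3) (θ' 0 + 2*Real.pi) (by linarith) (by linarith)
      calc min (θ' 0 + 2*Real.pi - θ' 3) (2*Real.pi - (θ' 0 + 2*Real.pi - θ' 3))
          = min ((θ' 0 + 2*Real.pi) - θ' 3) (2*Real.pi - ((θ' 0 + 2*Real.pi) - θ' 3)) := by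
            ring_nf
        _ ≤ _ := h
    have heq : Real.pi/2 * (c/(2*Real.pi)) = c/4 := by
      field_simp
      ring
    have hπ2 : (0:ℝ) < Real.pi/2 := by linarith
    -- gap lower bounds
    have hgap0 : ε ≤ θ' 1 - θ' 0 := by
      by_contra hcon
      push_neg at hcon
      have h2 : dist (φn n (σ 1)) (φn n (σ 0)) < δ :=
        hB n _ _ (lt_of_le_of_lt hch0 (lt_of_lt_of_le hcon hεε₁))
      have h3 : dist (φn n (σ 3)) (φn n (σ 2)) < δ := by rw [hd23, dist_comm]; exact h2
      have h4 : dist (σ 3) (σ 2) < c/(2*Real.pi) := hA n _ _ h3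
      have h5 := mul_lt_mul_of_pos_left h4 hπ2
      rcases min_lt_iff.mp (show min (θ' 3 - θ' 2) (2*Real.pi - (θ' 3 - θ' 2)) < c/4 by
        linarith) with h6 | h6 <;> linarith
    have hgap1 : ε ≤ θ' 2 - θ' 1 := by
      by_contra hcon
      push_neg at hcon
      have h2 : dist (φn n (σ 2)) (φn n (σ 1)) < δ :=
        hB n _ _ (lt_of_le_of_lt hch1 (lt_of_lt_of_le hcon hεε₁))
      have h3 : dist (φn n (σ 3)) (φn n (σ 0)) < δ := by rw [hd30]; exact h2
      have h4 : dist (σ 0) (σ 3) < c/(2*Real.pi) := by rw [dist_comm]; exact hA n _ _ h3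
      have h5 := mul_lt_mul_of_pos_left h4 hπ2
      rcases min_lt_iff.mp (show min (θ' 0 + 2*Real.pi - θ' 3)
          (2*Real.pi - (θ' 0 + 2*Real.pi - θ' 3)) < c/4 by linarith) with h6 | h6 <;> linarith
    have hgap2 : ε ≤ θ' 3 - θ' 2 := by
      by_contra hcon
      push_neg at hcon
      have h2 : dist (φn n (σ 3)) (φn n (σ 2)) < δ :=
        hB n _ _ (lt_of_le_of_lt hch2 (lt_of_lt_of_le hcon hεε₁))
      have h3 : dist (φn n (σ 0)) (φn n (σ 1)) < δ := by rw [← hd23]; exact h2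
      have h4 : dist (σ 1) (σ 0) < c/(2*Real.pi) := by rw [dist_comm]; exact hA n _ _ h3
      have h5 := mul_lt_mul_of_pos_left h4 hπ2
      rcases min_lt_iff.mp (show min (θ' 1 - θ' 0) (2*Real.pi - (θ' 1 - θ' 0)) < c/4 by
        linarith) with h6 | h6 <;> linarith
    have hgap3 : ε ≤ θ' 0 + 2*Real.pi - θ' 3 := by
      by_contra hcon
      push_neg at hcon
      have h2 : dist (φn n (σ 0)) (φn n (σ 3)) < δ :=
        hB n _ _ (lt_of_le_of_lt hch3 (lt_of_lt_of_le hcon hεε₁))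
      have h3 : dist (φn n (σ 2)) (φn n (σ 1)) < δ := by rw [← hd30, dist_comm]; exact h2
      have h4 : dist (σ 2) (σ 1) < c/(2*Real.pi) := hA n _ _ h3
      have h5 := mul_lt_mul_of_pos_left h4 hπ2
      rcases min_lt_iff.mp (show min (θ' 2 - θ' 1) (2*Real.pi - (θ' 2 - θ' 1)) < c/4 by
        linarith) with h6 | h6 <;> linarith
    exact ⟨θ', ⟨⟨h0a, h0b⟩, by linarith, by linarith, by linarith, by linarith⟩,
      funext fun k => Subtype.ext (hσ k).symm⟩
end
end

section
/- Let γ be a Jordan loop and let E be a nonempty path-connected subset of I(γ) that is invariant under the cyclic relabeling map ψ (i.e. ψ(E) = E). Then 1 ∈ ρ(E) (E contains a square) and V(γ,E) = γ (every point of γ is a vertex of some member of E). -/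
open Set Filter

noncomputable section

lemma rect_facts {R : Fin 4 → ℂ} (h : IsLabeledRect R) :
    R 2 ≠ R 1 ∧ R 2 ≠ R 0 ∧ 0 < aspect R ∧ aspect (relabel R) = (aspect R)⁻¹ := by
  obtain ⟨h10, r, hr, h21, h3⟩ := h
  have hsub : R 1 - R 0 ≠ 0 := sub_ne_zero.2 h10
  have hIr : (Complex.I * (r : ℂ)) ≠ 0 :=
    mul_ne_zero Complex.I_ne_zero (by exact_mod_cast hr.ne')
  have h21' : R 2 - R 1 ≠ 0 := by rw [h21]; exact mul_ne_zero hIr hsub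
  have h20eq : R 2 - R 0 = (Complex.I * (r : ℂ) + 1) * (R 1 - R 0) := by
    linear_combination h21
  have h20 : R 2 - R 0 ≠ 0 := by
    rw [h20eq]
    refine mul_ne_zero ?_ hsub
    intro hc
    have := congrArg Complex.re hc
    simp [Complex.add_re, Complex.mul_re] at this
  have habs10 : 0 < ‖R 1 - R 0‖ := by
    simpa [norm_pos_iff] using hsub
  have habs21 : 0 < ‖R 2 - R 1‖ := by
    simpa [norm_pos_iff] using h21'
  refine ⟨sub_ne_zero.1 h21', sub_ne_zero.1 h20, div_pos habs21 habs10, ?_⟩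
  have e2 : relabel R 2 = R 3 := rfl
  have e1 : relabel R 1 = R 2 := rfl
  have e0 : relabel R 0 = R 1 := rfl
  have h32 : R 3 - R 2 = R 0 - R 1 := by linear_combination h3
  unfold aspect
  rw [e2, e1, e0, h32, inv_div, norm_sub_rev]

lemma relabel_mem {E : Set (Fin 4 → ℂ)} (hinv : relabel '' E = E)
    {R : Fin 4 → ℂ} (hR : R ∈ E) : relabel R ∈ E := by
  rw [← hinv]; exact Set.mem_image_of_mem _ hR

lemma coverall_aux (φ : S1 → ℂ) (hcont : Continuous φ) (hinj : Function.Injective φ)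
    (E : Set (Fin 4 → ℂ)) (hE : E ⊆ inscribed (Set.range φ))
    (hne : E.Nonempty) (hpc : IsPathConnected E)
    (hinv : relabel '' E = E) (p : ℂ) (hp : p ∈ Set.range φ) :
    p ∈ vertexSet E := by
  classical
  by_contra hpv
  obtain ⟨q, hq⟩ := hp
  have hvert : ∀ R ∈ E, ∀ k, R k ≠ p := by
    intro R hR k hk
    exact hpv ⟨R, hR, k, hk⟩
  -- the inverse of φ is continuous
  have hecont : Continuous (Equiv.ofInjective φ hinj) :=
    Continuous.subtype_mk hcont _
  let h : S1 ≃ₜ Set.range φ := hecont.homeoOfEquivCompactToT2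
  have hsymm : ∀ (z : ℂ) (hz : z ∈ Set.range φ), φ (h.symm ⟨z, hz⟩) = z := by
    intro z hz
    exact Equiv.apply_ofInjective_symm hinj ⟨z, hz⟩
  set ξ : ℂ → ℂ := fun z =>
    if hz : z ∈ Set.range φ then ((h.symm ⟨z, hz⟩ : S1) : ℂ) else 0 with hξdef
  have hξval : ∀ (z : ℂ) (hz : z ∈ Set.range φ),
      ξ z = ((h.symm ⟨z, hz⟩ : S1) : ℂ) := fun z hz => dif_pos hz
  have hξabs : ∀ z ∈ Set.range φ, ‖ξ z‖ = 1 := by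
    intro z hz
    rw [hξval z hz]
    have := (h.symm ⟨z, hz⟩ : S1).2
    simpa [Complex.dist_eq] using this
  have hξcont : ContinuousOn ξ (Set.range φ) := by
    rw [continuousOn_iff_continuous_restrict]
    have hres : Set.domRestrict (Set.range φ) ξ = fun x => ((h.symm x : S1) : ℂ) := by
      funext x
      rw [Set.domRestrict_apply, hξval x.1 x.2]
    rw [hres]
    exact continuous_subtype_val.comp h.symm.continuous
  have hξinj : ∀ z ∈ Set.range φ, ∀ w ∈ Set.range φ, ξ z = ξ w → z = w := by
    intro z hz w hw hzw
    rw [hξval z hz, hξval w hw] at hzw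
    have h2 : (h.symm ⟨z, hz⟩ : S1) = h.symm ⟨w, hw⟩ := Subtype.ext hzw
    have := congrArg φ h2
    rwa [hsymm z hz, hsymm w hw] at this
  have hξp : ξ p = (q : ℂ) := by
    have hpmem : p ∈ Set.range φ := ⟨q, hq⟩
    rw [hξval p hpmem]
    congr 1
    apply hinj
    rw [hsymm p hpmem, hq]
  have hqabs : ‖(q : ℂ)‖ = 1 := by
    have := q.2
    simpa [Complex.dist_eq] using this
  have hqne : (-(q : ℂ)) ≠ 0 := by
    simp only [ne_eq, neg_eq_zero]
    intro hc
    rw [hc] at hqabs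
    simp at hqabs
  set G : ℂ → ℝ := fun z => Complex.arg (ξ z / (-(q : ℂ))) with hGdef
  have hwabs : ∀ z ∈ Set.range φ, ‖ξ z / (-(q : ℂ))‖ = 1 := by
    intro z hz
    rw [norm_div, norm_neg, hξabs z hz, hqabs, div_one]
  have hGcont : ContinuousOn G (Set.range φ \ {p}) := by
    intro z hz
    obtain ⟨hz1, hz2⟩ := hz
    have hz2' : z ≠ p := hz2
    have h1 : ContinuousWithinAt (fun z => ξ z / (-(q : ℂ))) (Set.range φ) z :=
      (hξcont z hz1).div_const _
    have harg : ContinuousAt Complex.arg (ξ z / (-(q : ℂ))) := by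
      apply Complex.continuousAt_arg
      rw [Complex.mem_slitPlane_iff]
      by_contra hbad
      push_neg at hbad
      obtain ⟨hre, him⟩ := hbad
      set w := ξ z / (-(q : ℂ)) with hw
      have habsw : ‖w‖ = 1 := hwabs z hz1
      have hsq : w.re ^ 2 + w.im ^ 2 = 1 := by
        have := Complex.sq_norm w
        rw [habsw] at this
        simpa [Complex.normSq_apply, sq] using this.symm
      have hrem : w.re = -1 := by nlinarith
      have hwm : w = -1 := by
        apply Complex.ext <;> simp [hrem, him]
      have hξq : ξ z = (q : ℂ) := by
        have : ξ z = w * (-(q : ℂ)) := by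
          rw [hw, div_mul_cancel₀ _ hqne]
        rw [this, hwm]; ring
      exact hz2' (hξinj z hz1 p ⟨q, hq⟩ (by rw [hξq, hξp]))
    have hcomp : ContinuousWithinAt (Complex.arg ∘ fun z => ξ z / (-(q : ℂ)))
        (Set.range φ \ {p}) z :=
      ContinuousAt.comp_continuousWithinAt (x := z) harg (h1.mono Set.diff_subset)
    exact hcomp
  have hGinj : ∀ z ∈ Set.range φ, ∀ w ∈ Set.range φ, G z = G w → z = w := by
    intro z hz w hw hGzw
    apply hξinj z hz w hw
    have hdiv : ξ z / (-(q : ℂ)) = ξ w / (-(q : ℂ)) :=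
      Complex.ext_norm_arg (by rw [hwabs z hz, hwabs w hw]) hGzw
    have h' := congrArg (fun x => x * (-(q : ℂ))) hdiv
    simpa [div_mul_cancel₀ _ hqne] using h'
  set F : (Fin 4 → ℂ) → ℝ := fun R => G (R 0) - G (R 2) with hFdef
  have hmap0 : Set.MapsTo (fun R : Fin 4 → ℂ => R 0) E (Set.range φ \ {p}) :=
    fun R hR => ⟨(hE hR).2 0, hvert R hR 0⟩
  have hmap2 : Set.MapsTo (fun R : Fin 4 → ℂ => R 2) E (Set.range φ \ {p}) :=
    fun R hR => ⟨(hE hR).2 2, hvert R hR 2⟩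
  have hFcont : ContinuousOn F E :=
    (hGcont.comp (continuous_apply 0).continuousOn hmap0).sub
      (hGcont.comp (continuous_apply 2).continuousOn hmap2)
  have hFne : ∀ S ∈ E, F S ≠ 0 := by
    intro S hS h0
    have h02 : S 2 ≠ S 0 := (rect_facts (hE hS).1).2.1
    have : G (S 0) = G (S 2) := by
      have := sub_eq_zero.1 h0
      exact this
    exact h02 (hGinj (S 0) ((hE hS).2 0) (S 2) ((hE hS).2 2) this).symm
  have hflip : ∀ R : Fin 4 → ℂ, F (relabel (relabel R)) = -(F R) := by
    intro R
    have e0 : relabel (relabel R) 0 = R 2 := rfl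
    have e2 : relabel (relabel R) 2 = R 0 := rfl
    simp only [hFdef, e0, e2]
    ring
  obtain ⟨R, hR⟩ := hne
  have hR2 : relabel (relabel R) ∈ E := relabel_mem hinv (relabel_mem hinv hR)
  have himg : IsPreconnected (F '' E) :=
    (hpc.isConnected.image F hFcont).isPreconnected
  have ht : F R ∈ F '' E := Set.mem_image_of_mem _ hR
  have ht' : -(F R) ∈ F '' E := by
    have := Set.mem_image_of_mem F hR2
    rwa [hflip R] at this
  have h0 : (0 : ℝ) ∈ F '' E := by
    rcases le_total 0 (F R) with hle | hle
    · exact himg.Icc_subset ht' ht ⟨neg_nonpos.2 hle, hle⟩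
    · exact himg.Icc_subset ht ht' ⟨hle, neg_nonneg.2 hle⟩
  obtain ⟨S, hS, hS0⟩ := h0
  exact hFne S hS hS0

theorem elliptic_coverall (φ : S1 → ℂ) (hφ : IsCCWJordan φ)
    (E : Set (Fin 4 → ℂ)) (hE : E ⊆ inscribed (Set.range φ))
    (hne : E.Nonempty) (hpc : IsPathConnected E)
    (hinv : relabel '' E = E) :
    (∃ R ∈ E, aspect R = 1) ∧ vertexSet E = Set.range φ := by
  obtain ⟨hcont, hinj, -⟩ := hφ
  constructor
  · -- aspect part
    obtain ⟨R, hR⟩ := hne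
    have hfacts := rect_facts (hE hR).1
    have ha : 0 < aspect R := hfacts.2.2.1
    have hacont : ContinuousOn aspect E := by
      apply ContinuousOn.div
      · exact (continuous_norm.comp
          ((continuous_apply 2).sub (continuous_apply 1))).continuousOn
      · exact (continuous_norm.comp
          ((continuous_apply 1).sub (continuous_apply 0))).continuousOn
      · intro S hS
        have := (hE hS).1.1
        simpa [sub_eq_zero] using this
    have himg : IsPreconnected (aspect '' E) :=
      (hpc.isConnected.image aspect hacont).isPreconnected
    have h1 : aspect R ∈ aspect '' E := Set.mem_image_of_mem _ hR
    have h2 : (aspect R)⁻¹ ∈ aspect '' E := by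
      refine ⟨relabel R, relabel_mem hinv hR, hfacts.2.2.2⟩
    have h1mem : (1 : ℝ) ∈ aspect '' E := by
      rcases le_total (aspect R) 1 with hle | hle
      · have hinv1 : 1 ≤ (aspect R)⁻¹ := by
          exact (one_le_inv₀ ha).2 hle
        exact himg.Icc_subset h1 h2 ⟨hle, hinv1⟩
      · have hinv1 : (aspect R)⁻¹ ≤ 1 := by
          exact (inv_le_one₀ ha).2 hle
        exact himg.Icc_subset h2 h1 ⟨hinv1, hle⟩
    obtain ⟨S, hS, hS1⟩ := h1mem
    exact ⟨S, hS, hS1⟩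
  · apply Set.eq_of_subset_of_subset
    · rintro z ⟨R, hR, k, hk⟩
      rw [← hk]
      exact (hE hR).2 k
    · intro p hp
      exact coverall_aux φ hcont hinj E hE hne hpc hinv p hp
end
end

section
/- Let γ be a polygon and let A be a connected component of I(γ) that is homeomorphic to ℝ via a homeomorphism h : ℝ → A, such that ρ(h(t)) → 0 as t → −∞, ρ(h(t)) → ∞ as t → +∞, and the aspect ratio function ρ is locally injective at every point of A with ρ = 1 (i.e. ρ restricted to some neighborhood in A of each such point is injective). Then the set of squares in A (members with ρ = 1) is finite and has odd cardinality. -/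
open Set Filter

noncomputable section

private lemma parity_aux (g : ℝ → ℝ) (hg : Continuous g)
    (hflip : ∀ t, g t = 0 → ∃ δ > 0,
      ((∀ s ∈ Set.Ioo (t - δ) t, g s < 0) ∧ (∀ s ∈ Set.Ioo t (t + δ), 0 < g s)) ∨
      ((∀ s ∈ Set.Ioo (t - δ) t, 0 < g s) ∧ (∀ s ∈ Set.Ioo t (t + δ), g s < 0))) :
    ∀ n : ℕ, ∀ a b : ℝ, a < b → g a ≠ 0 → g b ≠ 0 →
      {t ∈ Set.Ioo a b | g t = 0}.Finite →
      {t ∈ Set.Ioo a b | g t = 0}.ncard = n →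
      ((0 < g a ↔ 0 < g b) ↔ Even n) := by
  intro n
  induction n with
  | zero =>
    intro a b hab ha hb hfin hcard
    have hempty : {t ∈ Set.Ioo a b | g t = 0} = ∅ := (Set.ncard_eq_zero hfin).mp hcard
    have hnoz : ∀ t ∈ Set.Ioo a b, g t ≠ 0 := by
      intro t ht htz
      have hmem : t ∈ {t | t ∈ Set.Ioo a b ∧ g t = 0} := ⟨ht, htz⟩
      rw [hempty] at hmem
      exact hmem
    simp only [Even.zero, iff_true]
    constructor
    · intro hga
      by_contra hgb
      push_neg at hgb
      have hgb' : g b < 0 := lt_of_le_of_ne hgb hb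
      obtain ⟨t, ht, htz⟩ := intermediate_value_Ioo' hab.le hg.continuousOn
        (show (0:ℝ) ∈ Set.Ioo (g b) (g a) from ⟨hgb', hga⟩)
      exact hnoz t ht htz
    · intro hgb
      by_contra hga
      push_neg at hga
      have hga' : g a < 0 := lt_of_le_of_ne hga ha
      obtain ⟨t, ht, htz⟩ := intermediate_value_Ioo hab.le hg.continuousOn
        (show (0:ℝ) ∈ Set.Ioo (g a) (g b) from ⟨hga', hgb⟩)
      exact hnoz t ht htz
  | succ n ih =>
    intro a b hab ha hb hfin hcard
    set Z := {t ∈ Set.Ioo a b | g t = 0} with hZ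
    have hne : Z.Nonempty := by
      rw [Set.nonempty_iff_ne_empty]
      intro hE
      rw [hE] at hcard
      simp at hcard
    obtain ⟨t₁, ht₁Z, ht₁min⟩ := Set.exists_min_image Z id hfin hne
    obtain ⟨⟨hat₁, ht₁b⟩, ht₁z⟩ := id ht₁Z
    obtain ⟨δ, hδ, hflip₁⟩ := hflip t₁ ht₁z
    -- choose points s (left) and c (right)
    set s : ℝ := t₁ - min δ (t₁ - a) / 2 with hs
    set c : ℝ := t₁ + min δ (b - t₁) / 2 with hc
    have hmins : 0 < min δ (t₁ - a) := lt_min hδ (by linarith)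
    have hminc : 0 < min δ (b - t₁) := lt_min hδ (by linarith)
    have hsmem : s ∈ Set.Ioo (t₁ - δ) t₁ := by
      constructor
      · have : min δ (t₁ - a) ≤ δ := min_le_left _ _
        simp only [hs]; linarith
      · simp only [hs]; linarith
    have hcmem : c ∈ Set.Ioo t₁ (t₁ + δ) := by
      constructor
      · simp only [hc]; linarith
      · have : min δ (b - t₁) ≤ δ := min_le_left _ _
        simp only [hc]; linarith
    have has : a < s := by
      have : min δ (t₁ - a) ≤ t₁ - a := min_le_right _ _
      simp only [hs]; linarith
    have hcb : c < b := by
      have : min δ (b - t₁) ≤ b - t₁ := min_le_right _ _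
      simp only [hc]; linarith
    have hst₁ : s < t₁ := hsmem.2
    have ht₁c : t₁ < c := hcmem.1
    -- no zeros in (a, t₁)
    have hnoz_left : ∀ u ∈ Set.Ioo a t₁, g u ≠ 0 := by
      intro u hu huz
      have huZ : u ∈ Z := ⟨⟨hu.1, hu.2.trans ht₁b⟩, huz⟩
      exact absurd (ht₁min u huZ) (by simpa using hu.2.not_ge)
    -- sign of g s determines sign of g a
    have hsame : ∀ u ∈ Set.Ioo a t₁, (0 < g a ↔ 0 < g u) := by
      intro u hu
      have hune : g u ≠ 0 := hnoz_left u hu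
      constructor
      · intro hga
        by_contra hgu
        push_neg at hgu
        have : g u < 0 := lt_of_le_of_ne hgu hune
        obtain ⟨v, hv, hvz⟩ := intermediate_value_Ioo' hu.1.le (hg.continuousOn)
          (show (0:ℝ) ∈ Set.Ioo (g u) (g a) from ⟨this, hga⟩)
        exact hnoz_left v ⟨hv.1, hv.2.trans hu.2⟩ hvz
      · intro hgu
        by_contra hga
        push_neg at hga
        have : g a < 0 := lt_of_le_of_ne hga ha
        obtain ⟨v, hv, hvz⟩ := intermediate_value_Ioo hu.1.le (hg.continuousOn)
          (show (0:ℝ) ∈ Set.Ioo (g a) (g u) from ⟨this, hgu⟩)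
        exact hnoz_left v ⟨hv.1, hv.2.trans hu.2⟩ hvz
    -- zeros in (c, b) = Z \ {t₁}
    have hZc : {t ∈ Set.Ioo c b | g t = 0} = Z \ {t₁} := by
      ext u
      simp only [Set.mem_setOf_eq, Set.mem_diff, Set.mem_singleton_iff, Set.mem_Ioo, hZ]
      constructor
      · rintro ⟨⟨hcu, hub⟩, huz⟩
        exact ⟨⟨⟨lt_trans (lt_trans hat₁ ht₁c) hcu, hub⟩, huz⟩, by intro he; rw [he] at hcu; linarith⟩
      · rintro ⟨⟨⟨hau, hub⟩, huz⟩, hune⟩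
        refine ⟨⟨?_, hub⟩, huz⟩
        have ht₁u : t₁ < u := lt_of_le_of_ne (ht₁min u ⟨⟨hau, hub⟩, huz⟩) (Ne.symm hune)
        by_contra hcu
        push_neg at hcu
        have humem : u ∈ Set.Ioo t₁ (t₁ + δ) := ⟨ht₁u, lt_of_le_of_lt hcu hcmem.2⟩
        rcases hflip₁ with ⟨_, hr⟩ | ⟨_, hr⟩
        · exact absurd huz (ne_of_gt (hr u humem))
        · exact absurd huz (ne_of_lt (hr u humem))
    have hcne : g c ≠ 0 := by
      rcases hflip₁ with ⟨_, hr⟩ | ⟨_, hr⟩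
      · exact ne_of_gt (hr c hcmem)
      · exact ne_of_lt (hr c hcmem)
    have hfin' : {t ∈ Set.Ioo c b | g t = 0}.Finite := by rw [hZc]; exact hfin.diff
    have hcard' : {t ∈ Set.Ioo c b | g t = 0}.ncard = n := by
      rw [hZc, Set.ncard_diff_singleton_of_mem ht₁Z, hcard]
      rfl
    have hih := ih c b hcb hcne hb hfin' hcard'
    -- sign relation between g a and g c
    have hac : ¬ (0 < g a ↔ 0 < g c) := by
      have hsa := hsame s ⟨has, hst₁⟩
      rcases hflip₁ with ⟨hl, hr⟩ | ⟨hl, hr⟩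
      · have h1 : g s < 0 := hl s hsmem
        have h2 : 0 < g c := hr c hcmem
        intro hiff
        exact absurd (hsa.mp (hiff.mpr h2)) (not_lt.mpr h1.le)
      · have h1 : 0 < g s := hl s hsmem
        have h2 : g c < 0 := hr c hcmem
        intro hiff
        exact absurd (hiff.mp (hsa.mpr h1)) (not_lt.mpr h2.le)
    rw [Nat.even_add_one]
    tauto

private lemma real_main (f : ℝ → ℝ) (hf : Continuous f)
    (h0 : Tendsto f atBot (nhds 0)) (hinf : Tendsto f atTop atTop)
    (hloc : ∀ t, f t = 1 → ∃ δ > 0, Set.InjOn f (Set.Ioo (t - δ) (t + δ))) :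
    {t | f t = 1}.Finite ∧ Odd {t | f t = 1}.ncard := by
  set S := {t | f t = 1} with hS
  -- bounds
  have hIio : ∀ᶠ t in atBot, f t < 1 := h0 (Iio_mem_nhds one_pos)
  obtain ⟨a, hagen⟩ := eventually_atBot.mp hIio
  have hIoi : ∀ᶠ t in atTop, 1 < f t := hinf.eventually_gt_atTop 1
  obtain ⟨b₀, hbgen⟩ := eventually_atTop.mp hIoi
  set b := max b₀ (a + 1) with hb
  have hab : a < b := lt_of_lt_of_le (by linarith) (le_max_right _ _)
  have hfa : f a < 1 := hagen a le_rfl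
  have hfb : 1 < f b := hbgen b (le_max_left _ _)
  have hSsub : S ⊆ Set.Ioo a b := by
    intro t ht
    constructor
    · by_contra hta
      push_neg at hta
      exact absurd ht (ne_of_lt (hagen t hta))
    · by_contra htb
      push_neg at htb
      exact absurd ht (ne_of_gt (hbgen t (le_trans (le_max_left _ _) htb)))
  -- flip property for g = f - 1
  set g : ℝ → ℝ := fun t => f t - 1 with hg
  have hgc : Continuous g := hf.sub continuous_const
  have hflip : ∀ t, g t = 0 → ∃ δ > 0,
      ((∀ s ∈ Set.Ioo (t - δ) t, g s < 0) ∧ (∀ s ∈ Set.Ioo t (t + δ), 0 < g s)) ∨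
      ((∀ s ∈ Set.Ioo (t - δ) t, 0 < g s) ∧ (∀ s ∈ Set.Ioo t (t + δ), g s < 0)) := by
    intro t htz
    have htf : f t = 1 := by simpa [hg, sub_eq_zero] using htz
    obtain ⟨δ, hδ, hinj⟩ := hloc t htf
    refine ⟨δ / 2, by linarith, ?_⟩
    have hsub : Set.Icc (t - δ/2) (t + δ/2) ⊆ Set.Ioo (t - δ) (t + δ) := by
      intro u hu
      exact ⟨by linarith [hu.1], by linarith [hu.2]⟩
    have hmono := ContinuousOn.strictMonoOn_of_injOn_Icc' (f := f)
      (by linarith : t - δ/2 ≤ t + δ/2) hf.continuousOn (hinj.mono hsub)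
    have htmem : t ∈ Set.Icc (t - δ/2) (t + δ/2) := ⟨by linarith, by linarith⟩
    rcases hmono with hm | hm
    · left
      constructor
      · intro s hs
        have hsm : s ∈ Set.Icc (t - δ/2) (t + δ/2) := ⟨hs.1.le, by linarith [hs.2]⟩
        have := hm hsm htmem hs.2
        simp only [hg]; rw [htf] at this; linarith
      · intro s hs
        have hsm : s ∈ Set.Icc (t - δ/2) (t + δ/2) := ⟨by linarith [hs.1], hs.2.le⟩
        have := hm htmem hsm hs.1
        simp only [hg]; rw [htf] at this; linarith
    · right
      constructor
      · intro s hs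
        have hsm : s ∈ Set.Icc (t - δ/2) (t + δ/2) := ⟨hs.1.le, by linarith [hs.2]⟩
        have := hm hsm htmem hs.2
        simp only [hg]; rw [htf] at this; linarith
      · intro s hs
        have hsm : s ∈ Set.Icc (t - δ/2) (t + δ/2) := ⟨by linarith [hs.1], hs.2.le⟩
        have := hm htmem hsm hs.1
        simp only [hg]; rw [htf] at this; linarith
  -- finiteness
  have hScl : IsClosed S := isClosed_eq hf continuous_const
  have hScpt : IsCompact S := Metric.isCompact_of_isClosed_isBounded hScl
    ((Metric.isBounded_Ioo a b).subset hSsub)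
  have hdisc : DiscreteTopology S := by
    rw [discreteTopology_subtype_iff]
    intro x hx
    rw [inf_principal_eq_bot]
    obtain ⟨δ, hδ, hinj⟩ := hloc x hx
    have hopen : Set.Ioo (x - δ) (x + δ) ∈ nhds x := Ioo_mem_nhds (by linarith) (by linarith)
    refine mem_of_superset (inter_mem_nhdsWithin _ hopen) ?_
    rintro u ⟨hune, humem⟩
    simp only [Set.mem_compl_iff, hS, Set.mem_setOf_eq]
    intro huf
    exact hune (hinj humem ⟨by linarith, by linarith⟩ (by rw [huf, hx]))
  have hSfin : S.Finite := hScpt.finite (isDiscrete_iff_discreteTopology.mpr hdisc)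
  refine ⟨hSfin, ?_⟩
  -- parity
  have hSeq : {t ∈ Set.Ioo a b | g t = 0} = S := by
    ext t
    simp only [Set.mem_setOf_eq, hS, hg, sub_eq_zero]
    constructor
    · rintro ⟨_, h⟩; exact h
    · intro h; exact ⟨hSsub h, h⟩
  have hga : g a ≠ 0 := by simp only [hg]; intro hh; rw [sub_eq_zero] at hh; linarith
  have hgb : g b ≠ 0 := by simp only [hg]; intro hh; rw [sub_eq_zero] at hh; linarith
  have hpar := parity_aux g hgc hflip S.ncard a b hab hga hgb
    (by rw [hSeq]; exact hSfin) (by rw [hSeq])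
  rw [← Nat.not_even_iff_odd]
  intro heven
  have : (0 < g a ↔ 0 < g b) := hpar.mpr heven
  have h1 : ¬ 0 < g a := by simp only [hg]; push_neg; linarith
  have h2 : 0 < g b := by simp only [hg]; linarith
  exact h1 (this.mpr h2)

theorem hyperbolic_odd_squares (φ : S1 → ℂ) (hφ : IsCCWJordan φ)
    (hpoly : IsPolygon (Set.range φ))
    (A : Set (Fin 4 → ℂ))
    (hcomp : ∃ R ∈ inscribed (Set.range φ),
      A = connectedComponentIn (inscribed (Set.range φ)) R)
    (h : ℝ ≃ₜ A)
    (h0 : Filter.Tendsto (fun t => aspect (h t).val) Filter.atBot (nhds 0))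
    (hinf : Filter.Tendsto (fun t => aspect (h t).val) Filter.atTop Filter.atTop)
    (hloc : ∀ R ∈ A, aspect R = 1 →
      ∃ U : Set (Fin 4 → ℂ), IsOpen U ∧ R ∈ U ∧ Set.InjOn aspect (U ∩ A)) :
    {R ∈ A | aspect R = 1}.Finite ∧ Odd {R ∈ A | aspect R = 1}.ncard := by
  
  obtain ⟨R₀, hR₀, hAeq⟩ := hcomp
  have hAsub : A ⊆ inscribed (Set.range φ) := by
    rw [hAeq]; exact connectedComponentIn_subset _ _
  set e : ℝ → (Fin 4 → ℂ) := fun t => (h t).val with he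
  have heA : ∀ t, e t ∈ A := fun t => (h t).2
  have hecont : Continuous e := continuous_subtype_val.comp h.continuous
  have heinj : Function.Injective e :=
    Subtype.val_injective.comp h.injective
  set f : ℝ → ℝ := fun t => aspect (e t) with hf
  have hfc : Continuous f := by
    have hnum : Continuous fun t => ‖e t 2 - e t 1‖ :=
      continuous_norm.comp (((continuous_apply 2).comp hecont).sub
        ((continuous_apply 1).comp hecont))
    have hden : Continuous fun t => ‖e t 1 - e t 0‖ :=
      continuous_norm.comp (((continuous_apply 1).comp hecont).sub
        ((continuous_apply 0).comp hecont))
    refine hnum.div hden ?_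
    intro t
    have hrect : IsLabeledRect (e t) := (hAsub (heA t)).1
    simpa [sub_eq_zero] using hrect.1
  have hfloc : ∀ t, f t = 1 → ∃ δ > 0, Set.InjOn f (Set.Ioo (t - δ) (t + δ)) := by
    intro t htf
    obtain ⟨U, hUopen, hUmem, hUinj⟩ := hloc (e t) (heA t) htf
    have hpre : IsOpen (e ⁻¹' U) := hUopen.preimage hecont
    obtain ⟨δ, hδ, hball⟩ := Metric.isOpen_iff.mp hpre t hUmem
    refine ⟨δ, hδ, ?_⟩
    intro s hs s' hs' hss
    have hsU : e s ∈ U := hball (by simpa [Real.ball_eq_Ioo] using hs)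
    have hs'U : e s' ∈ U := hball (by simpa [Real.ball_eq_Ioo] using hs')
    have := hUinj ⟨hsU, heA s⟩ ⟨hs'U, heA s'⟩ hss
    exact heinj this
  obtain ⟨hSfin, hSodd⟩ := real_main f hfc h0 hinf hfloc
  have himg : {R ∈ A | aspect R = 1} = e '' {t | f t = 1} := by
    ext R
    constructor
    · rintro ⟨hRA, hR1⟩
      refine ⟨h.symm ⟨R, hRA⟩, ?_, ?_⟩
      · show aspect (e _) = 1
        simp only [he, Homeomorph.apply_symm_apply]
        exact hR1
      · simp only [he, Homeomorph.apply_symm_apply]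
    · rintro ⟨t, htf, rfl⟩
      exact ⟨heA t, htf⟩
  rw [himg]
  exact ⟨hSfin.image e, by rwa [Set.ncard_image_of_injective _ heinj]⟩
end
end

section
/- Let γ be a polygon and let ζ be a connected component of I(γ) that is homeomorphic to a circle and on which the aspect ratio function ρ is locally injective at every point with ρ = 1. Then the set of squares in ζ (members with ρ = 1) is finite and has even cardinality. If moreover ψ²(ζ) = ζ but ψ(ζ) ≠ ζ (ζ has order 2 under the relabeling action), then the number of squares in ζ is divisible by 4. -/
open Set Filter

noncomputable section

namespace SqCore

open scoped Classical

variable (G : ℝ → ℝ)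

def AfterPos (t : ℝ) : Prop := ∃ δ > 0, ∀ s ∈ Set.Ioc t (t + δ), 1 < G s
def AfterNeg (t : ℝ) : Prop := ∃ δ > 0, ∀ s ∈ Set.Ioc t (t + δ), G s < 1
def BeforePos (t : ℝ) : Prop := ∃ δ > 0, ∀ s ∈ Set.Ico (t - δ) t, 1 < G s
def BeforeNeg (t : ℝ) : Prop := ∃ δ > 0, ∀ s ∈ Set.Ico (t - δ) t, G s < 1

def Crossing (t : ℝ) : Prop :=
  (AfterPos G t ∧ BeforeNeg G t) ∨ (AfterNeg G t ∧ BeforePos G t)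

noncomputable def sg (t : ℝ) : ℤ := if AfterPos G t then 1 else -1

variable {G}

lemma not_afterPos_afterNeg {t : ℝ} (h1 : AfterPos G t) (h2 : AfterNeg G t) : False := by
  obtain ⟨d1, hd1, h1⟩ := h1
  obtain ⟨d2, hd2, h2⟩ := h2
  have hm : t + min d1 d2 ∈ Set.Ioc t (t + d1) :=
    ⟨by simp [lt_min_iff, hd1, hd2], by simp [min_le_left]⟩
  have hm2 : t + min d1 d2 ∈ Set.Ioc t (t + d2) :=
    ⟨by simp [lt_min_iff, hd1, hd2], by simp [min_le_right]⟩
  exact absurd (h1 _ hm) (not_lt.2 (h2 _ hm2).le)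

lemma not_beforePos_beforeNeg {t : ℝ} (h1 : BeforePos G t) (h2 : BeforeNeg G t) : False := by
  obtain ⟨d1, hd1, h1⟩ := h1
  obtain ⟨d2, hd2, h2⟩ := h2
  have hm : t - min d1 d2 ∈ Set.Ico (t - d1) t :=
    ⟨by have := min_le_left d1 d2; linarith, by have := lt_min hd1 hd2; linarith⟩
  have hm2 : t - min d1 d2 ∈ Set.Ico (t - d2) t :=
    ⟨by have := min_le_right d1 d2; linarith, by have := lt_min hd1 hd2; linarith⟩
  exact absurd (h1 _ hm) (not_lt.2 (h2 _ hm2).le)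

lemma sg_eq_one_iff {t : ℝ} : sg G t = 1 ↔ AfterPos G t := by
  unfold sg; split <;> simp_all

lemma sg_eq_neg_one_iff {t : ℝ} : sg G t = -1 ↔ ¬ AfterPos G t := by
  unfold sg; split <;> simp_all

/-- sign constancy on zero-free intervals -/
lemma sign_const (hG : Continuous G) {a b : ℝ} (hab : a < b)
    (hz : ∀ s ∈ Set.Ioo a b, G s ≠ 1) :
    (∀ s ∈ Set.Ioo a b, 1 < G s) ∨ (∀ s ∈ Set.Ioo a b, G s < 1) := by
  by_contra h
  push_neg at h
  obtain ⟨⟨s1, hs1, hs1'⟩, ⟨s2, hs2, hs2'⟩⟩ := h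
  have hs1'' : G s1 < 1 := lt_of_le_of_ne hs1' (hz _ hs1)
  have hs2'' : 1 < G s2 := lt_of_le_of_ne' hs2' (hz _ hs2)
  rcases lt_trichotomy s1 s2 with h | h | h
  · have := intermediate_value_Icc h.le hG.continuousOn
    have h1 : (1:ℝ) ∈ Set.Icc (G s1) (G s2) := ⟨hs1''.le, hs2''.le⟩
    obtain ⟨x, hx, hx1⟩ := this h1
    exact hz x ⟨lt_of_lt_of_le hs1.1 hx.1, lt_of_le_of_lt hx.2 hs2.2⟩ hx1
  · rw [h] at hs1''; linarith
  · have := intermediate_value_Icc' h.le hG.continuousOn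
    have h1 : (1:ℝ) ∈ Set.Icc (G s1) (G s2) := ⟨hs1''.le, hs2''.le⟩
    obtain ⟨x, hx, hx1⟩ := this h1
    exact hz x ⟨lt_of_lt_of_le hs2.1 hx.1, lt_of_le_of_lt hx.2 hs1.2⟩ hx1

/-- propagation of sign across a zero-free open interval -/
lemma prop_sign (hG : Continuous G) {a b : ℝ} (hab : a < b)
    (hz : ∀ s ∈ Set.Ioo a b, G s ≠ 1) :
    (AfterPos G a ∧ BeforePos G b) ∨ (AfterNeg G a ∧ BeforeNeg G b) := by
  rcases sign_const hG hab hz with h | h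
  · left
    refine ⟨⟨(b - a)/2, by linarith, fun s hs => h s ⟨hs.1, by rcases hs with ⟨_, h2⟩; linarith⟩⟩,
      ⟨(b - a)/2, by linarith, fun s hs => h s ⟨by rcases hs with ⟨h1, _⟩; linarith, hs.2⟩⟩⟩
  · right
    refine ⟨⟨(b - a)/2, by linarith, fun s hs => h s ⟨hs.1, by rcases hs with ⟨_, h2⟩; linarith⟩⟩,
      ⟨(b - a)/2, by linarith, fun s hs => h s ⟨by rcases hs with ⟨h1, _⟩; linarith, hs.2⟩⟩⟩

/-- the sign flips from one zero to the next across a zero-free interval,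
    provided the right-hand zero is a crossing -/
lemma sg_flip (hG : Continuous G) {a b : ℝ} (hab : a < b)
    (hz : ∀ s ∈ Set.Ioo a b, G s ≠ 1) (hcb : Crossing G b) :
    sg G b = - sg G a := by
  rcases prop_sign hG hab hz with ⟨hpa, hpb⟩ | ⟨hna, hnb⟩
  · have h1 : sg G a = 1 := sg_eq_one_iff.2 hpa
    have h2 : AfterNeg G b := by
      rcases hcb with ⟨_, hbn⟩ | ⟨h, _⟩
      · exact absurd (not_beforePos_beforeNeg hpb hbn) (by simp)
      · exact h
    have : ¬ AfterPos G b := fun hp => not_afterPos_afterNeg hp h2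
    rw [h1, sg_eq_neg_one_iff.2 this]
  · have h1 : sg G a = -1 := sg_eq_neg_one_iff.2 (fun hp => not_afterPos_afterNeg hp hna)
    have h2 : AfterPos G b := by
      rcases hcb with ⟨h, _⟩ | ⟨_, hbp⟩
      · exact h
      · exact absurd (not_beforePos_beforeNeg hbp hnb) (by simp)
    rw [sg_eq_one_iff.2 h2, h1]; ring

section Periodic

variable {p : ℝ} (hper : ∀ t, G (t + p) = G t)

include hper

lemma afterPos_per {t : ℝ} : AfterPos G (t + p) ↔ AfterPos G t := by
  constructor
  · rintro ⟨δ, hδ, h⟩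
    refine ⟨δ, hδ, fun s hs => ?_⟩
    have := h (s + p) ⟨by linarith [hs.1], by linarith [hs.2]⟩
    rwa [hper s] at this
  · rintro ⟨δ, hδ, h⟩
    refine ⟨δ, hδ, fun s hs => ?_⟩
    have h2 := h (s - p) ⟨by linarith [hs.1], by linarith [hs.2]⟩
    have : G (s - p + p) = G (s - p) := hper _
    simp at this
    rwa [← this] at h2

lemma sg_per {t : ℝ} : sg G (t + p) = sg G t := by
  unfold sg
  by_cases h : AfterPos G t
  · rw [if_pos ((afterPos_per hper).2 h), if_pos h]
  · rw [if_neg (fun hh => h ((afterPos_per hper).1 hh)), if_neg h]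

lemma zero_per {t : ℝ} (h : G t = 1) : G (t + p) = 1 := by rw [hper]; exact h

lemma zero_per' {t : ℝ} (h : G t = 1) : G (t - p) = 1 := by
  have := hper (t - p); rw [sub_add_cancel] at this; rw [← this]; exact h

end Periodic


section Window

variable {p c : ℝ} {Zs : Finset ℝ}

/-- the next zero after `t` in the cyclic order of the window -/
noncomputable def nextZ (Zs : Finset ℝ) (t : ℝ) : ℝ :=
  if h : (Zs.filter fun z => t < z).Nonempty then (Zs.filter fun z => t < z).min' h
  else if h2 : Zs.Nonempty then Zs.min' h2 else 0

variable (hp : 0 < p) (hG : Continuous G) (hper : ∀ t, G (t + p) = G t)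
  (hc : G c ≠ 1) (hcr : ∀ t, G t = 1 → Crossing G t)
  (hZ : ∀ t, t ∈ Zs ↔ t ∈ Set.Ico c (c + p) ∧ G t = 1)

include hp hG hper hc hcr hZ

lemma sg_nextZ {t : ℝ} (ht : t ∈ Zs) : sg G (nextZ Zs t) = - sg G t := by
  unfold nextZ
  by_cases h : (Zs.filter fun z => t < z).Nonempty
  · rw [dif_pos h]
    set u := (Zs.filter fun z => t < z).min' h with hu
    have humem : u ∈ Zs.filter fun z => t < z := Finset.min'_mem _ h
    rw [Finset.mem_filter] at humem
    have htu : t < u := humem.2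
    have hnz : ∀ s ∈ Set.Ioo t u, G s ≠ 1 := by
      intro s hs hGs
      have hsw : s ∈ Set.Ico c (c + p) := by
        have h1 := ((hZ t).1 ht).1
        have h2 := ((hZ u).1 humem.1).1
        exact ⟨le_of_lt (lt_of_le_of_lt h1.1 hs.1), lt_trans hs.2 h2.2⟩
      have hsZ : s ∈ Zs.filter fun z => t < z :=
        Finset.mem_filter.2 ⟨(hZ s).2 ⟨hsw, hGs⟩, hs.1⟩
      exact absurd (Finset.min'_le _ _ hsZ) (not_le.2 hs.2)
    exact sg_flip hG htu hnz (hcr u ((hZ u).1 humem.1).2)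
  · rw [dif_neg h, dif_pos ⟨t, ht⟩]
    set m := Zs.min' ⟨t, ht⟩ with hm
    have hmZ : m ∈ Zs := Finset.min'_mem _ _
    have hmc : m ∈ Set.Ico c (c + p) := ((hZ m).1 hmZ).1
    have htc : t ∈ Set.Ico c (c + p) := ((hZ t).1 ht).1
    have htlt : t < m + p := by linarith [htc.2, hmc.1]
    have hnz : ∀ s ∈ Set.Ioo t (m + p), G s ≠ 1 := by
      intro s hs hGs
      by_cases hsc : s < c + p
      · have hsZ : s ∈ Zs := (hZ s).2 ⟨⟨le_of_lt (lt_of_le_of_lt htc.1 hs.1), hsc⟩, hGs⟩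
        exact h ⟨s, Finset.mem_filter.2 ⟨hsZ, hs.1⟩⟩
      · push_neg at hsc
        have hGs' : G (s - p) = 1 := zero_per' hper hGs
        have hsZ : s - p ∈ Zs := (hZ _).2 ⟨⟨by linarith, by linarith [hs.2, hmc.2]⟩, hGs'⟩
        have := Finset.min'_le _ _ hsZ
        rw [← hm] at this
        linarith [hs.2]
    have hcross : Crossing G (m + p) := hcr _ (zero_per hper ((hZ m).1 hmZ).2)
    have := sg_flip hG htlt hnz hcross
    rw [sg_per hper] at this
    exact this

lemma nextZ_mem {t : ℝ} (ht : t ∈ Zs) : nextZ Zs t ∈ Zs := by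
  unfold nextZ
  by_cases h : (Zs.filter fun z => t < z).Nonempty
  · rw [dif_pos h]
    exact (Finset.mem_filter.1 (Finset.min'_mem _ h)).1
  · rw [dif_neg h, dif_pos ⟨t, ht⟩]
    exact Finset.min'_mem _ _

omit hp hG hper hc hcr hZ in
lemma nextZ_inj_aux {t t' : ℝ} (ht : t ∈ Zs) (ht' : t' ∈ Zs) (htt : t < t') :
    nextZ Zs t ≠ nextZ Zs t' := by
  intro heq
  unfold nextZ at heq
  have hne : (Zs.filter fun z => t < z).Nonempty := ⟨t', Finset.mem_filter.2 ⟨ht', htt⟩⟩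
  rw [dif_pos hne] at heq
  by_cases h' : (Zs.filter fun z => t' < z).Nonempty
  · rw [dif_pos h'] at heq
    have h1 : (Zs.filter fun z => t < z).min' hne ≤ t' :=
      Finset.min'_le _ _ (Finset.mem_filter.2 ⟨ht', htt⟩)
    have h2 : t' < (Zs.filter fun z => t' < z).min' h' :=
      (Finset.mem_filter.1 (Finset.min'_mem _ h')).2
    rw [heq] at h1; linarith
  · rw [dif_neg h', dif_pos ⟨t, ht⟩] at heq
    have h1 : Zs.min' ⟨t, ht⟩ ≤ t := Finset.min'_le _ _ ht
    have h2 : t < (Zs.filter fun z => t < z).min' hne :=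
      (Finset.mem_filter.1 (Finset.min'_mem _ hne)).2
    rw [heq] at h2; linarith

omit hp hG hper hc hcr hZ in
lemma nextZ_injOn : Set.InjOn (nextZ Zs) Zs := by
  intro a ha b hb hab
  rcases lt_trichotomy a b with h | h | h
  · exact absurd hab (nextZ_inj_aux ha hb h)
  · exact h
  · exact absurd hab.symm (nextZ_inj_aux hb ha h)

lemma card_pos_eq_neg :
    (Zs.filter fun t => sg G t = 1).card = (Zs.filter fun t => sg G t = -1).card := by
  apply le_antisymm
  · apply Finset.card_le_card_of_injOn (nextZ Zs)
    · intro t htm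
      rw [Finset.mem_coe, Finset.mem_filter] at htm ⊢
      refine ⟨nextZ_mem hp hG hper hc hcr hZ htm.1, ?_⟩
      rw [sg_nextZ hp hG hper hc hcr hZ htm.1, htm.2]
    · intro a ha b hb
      exact nextZ_injOn (Finset.mem_coe.1 (Finset.mem_filter.1 ha).1)
        (Finset.mem_coe.1 (Finset.mem_filter.1 hb).1)
  · apply Finset.card_le_card_of_injOn (nextZ Zs)
    · intro t htm
      rw [Finset.mem_coe, Finset.mem_filter] at htm ⊢
      refine ⟨nextZ_mem hp hG hper hc hcr hZ htm.1, ?_⟩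
      rw [sg_nextZ hp hG hper hc hcr hZ htm.1, htm.2]; ring
    · intro a ha b hb
      exact nextZ_injOn (Finset.mem_coe.1 (Finset.mem_filter.1 ha).1)
        (Finset.mem_coe.1 (Finset.mem_filter.1 hb).1)

lemma card_eq_two_mul :
    Zs.card = 2 * (Zs.filter fun t => sg G t = 1).card := by
  have hsplit := Finset.card_filter_add_card_filter_not
    (s := Zs) (p := fun t => sg G t = 1)
  have hneg : (Zs.filter fun t => ¬ sg G t = 1) = (Zs.filter fun t => sg G t = -1) := by
    apply Finset.filter_congr
    intro t _
    unfold sg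
    split <;> norm_num
  rw [hneg, ← card_pos_eq_neg hp hG hper hc hcr hZ] at hsplit
  omega

theorem even_card : Even Zs.card := by
  rw [card_eq_two_mul hp hG hper hc hcr hZ]
  exact ⟨_, (two_mul _)⟩

end Window


/-- a finite set with a fixed-point-free involution has even cardinality -/
lemma even_card_of_involution :
    ∀ (n : ℕ) (s : Finset ℝ) (f : ℝ → ℝ), s.card = n →
    (∀ x ∈ s, f x ∈ s) → (∀ x ∈ s, f (f x) = x) → (∀ x ∈ s, f x ≠ x) →
    Even s.card := by
  intro n
  induction n using Nat.strong_induction_on with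
  | _ n ih =>
    intro s f hcard hmap hinv hfree
    rcases Finset.eq_empty_or_nonempty s with rfl | ⟨x, hx⟩
    · simp
    · have hfx : f x ∈ s := hmap x hx
      have hne : f x ≠ x := hfree x hx
      set s' := (s.erase x).erase (f x) with hs'
      have hxs' : ∀ y, y ∈ s' ↔ y ∈ s ∧ y ≠ x ∧ y ≠ f x := by
        intro y
        simp only [hs', Finset.mem_erase]
        tauto
      have hcard' : s'.card = s.card - 2 := by
        rw [hs', Finset.card_erase_of_mem, Finset.card_erase_of_mem hx]
        · omega
        · exact Finset.mem_erase.2 ⟨hne, hfx⟩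
      have hmap' : ∀ y ∈ s', f y ∈ s' := by
        intro y hy
        rw [hxs'] at hy ⊢
        refine ⟨hmap y hy.1, ?_, ?_⟩
        · intro h
          have := hinv y hy.1
          rw [h] at this
          exact hy.2.2 this.symm
        · intro h
          have h1 := hinv y hy.1
          have h2 := hinv x hx
          rw [h] at h1
          rw [h2] at h1
          exact hy.2.1 h1.symm
      have hcards : s.card = n := hcard
      have hpos : 2 ≤ s.card := by
        have : f x ∈ s.erase x := Finset.mem_erase.2 ⟨hne, hfx⟩
        have h1 : 1 ≤ (s.erase x).card := Finset.card_pos.2 ⟨f x, this⟩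
        have h2 := Finset.card_erase_of_mem hx
        omega
      have := ih (s.card - 2) (by omega) s' f (by omega)
        hmap' (fun y hy => hinv y ((hxs' y).1 hy).1)
        (fun y hy => hfree y ((hxs' y).1 hy).1)
      rw [hcard'] at this
      rcases this with ⟨k, hk⟩
      exact ⟨k + 1, by omega⟩

section Rho

variable {p c : ℝ} {Zs : Finset ℝ} {H : ℝ → ℝ}

variable (hp : 0 < p) (hG : Continuous G) (hper : ∀ t, G (t + p) = G t)
  (hc : G c ≠ 1) (hcr : ∀ t, G t = 1 → Crossing G t)
  (hZ : ∀ t, t ∈ Zs ↔ t ∈ Set.Ico c (c + p) ∧ G t = 1)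
  (hHc : Continuous H) (hHm : StrictMono H)
  (hGH : ∀ t, G (H t) = G t)
  (hH1 : ∀ t, t < H t) (hH2 : ∀ t, H t < t + p)
  (hHH : ∀ t, H (H t) = t + p) (hHper : ∀ t, H (t + p) = H t + p)

include hHc hHm hGH hcr in
/-- transport of the crossing sign along H -/
lemma sg_H {t : ℝ} (hz : G t = 1) : sg G (H t) = sg G t := by
  have key : ∀ u, AfterPos G u → AfterPos G (H u) := by
    rintro u ⟨δ, hδ, hpos⟩
    refine ⟨H (u + δ) - H u, by linarith [hHm (show u < u + δ by linarith)], ?_⟩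
    intro s hs
    have hs' : s ∈ Set.Ioc (H u) (H (u + δ)) := ⟨hs.1, by linarith [hs.2]⟩
    obtain ⟨w, hw, hws⟩ := intermediate_value_Ioc (by linarith : u ≤ u + δ)
      hHc.continuousOn hs'
    rw [← hws, hGH]
    exact hpos w hw
  have keyn : ∀ u, AfterNeg G u → AfterNeg G (H u) := by
    rintro u ⟨δ, hδ, hpos⟩
    refine ⟨H (u + δ) - H u, by linarith [hHm (show u < u + δ by linarith)], ?_⟩
    intro s hs
    have hs' : s ∈ Set.Ioc (H u) (H (u + δ)) := ⟨hs.1, by linarith [hs.2]⟩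
    obtain ⟨w, hw, hws⟩ := intermediate_value_Ioc (by linarith : u ≤ u + δ)
      hHc.continuousOn hs'
    rw [← hws, hGH]
    exact hpos w hw
  by_cases h : AfterPos G t
  · rw [sg_eq_one_iff.2 h, sg_eq_one_iff.2 (key t h)]
  · have han : AfterNeg G t := by
      rcases hcr t hz with ⟨hap, _⟩ | ⟨han, _⟩
      · exact absurd hap h
      · exact han
    have h2 : ¬ AfterPos G (H t) := fun hh => not_afterPos_afterNeg hh (keyn t han)
    rw [sg_eq_neg_one_iff.2 h, sg_eq_neg_one_iff.2 h2]

/-- the induced pairing on the window -/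
noncomputable def rho (H : ℝ → ℝ) (c p : ℝ) (t : ℝ) : ℝ :=
  if H t < c + p then H t else H t - p

include hp hG hper hc hcr hZ hHc hHm hGH hH1 hH2 hHH hHper in
theorem four_dvd_card : 4 ∣ Zs.card := by
  have hrho_mem : ∀ t ∈ Zs, rho H c p t ∈ Zs := by
    intro t ht
    obtain ⟨⟨htc, htcp⟩, htz⟩ := (hZ t).1 ht
    have hz : G (H t) = 1 := by rw [hGH]; exact htz
    unfold rho
    split
    · exact (hZ _).2 ⟨⟨by linarith [hH1 t], by assumption⟩, hz⟩
    · push_neg at *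
      refine (hZ _).2 ⟨⟨by linarith, by linarith [hH2 t]⟩, zero_per' hper hz⟩
  have hrho_inv : ∀ t ∈ Zs, rho H c p (rho H c p t) = t := by
    intro t ht
    obtain ⟨⟨htc, htcp⟩, htz⟩ := (hZ t).1 ht
    unfold rho
    by_cases h1 : H t < c + p
    · rw [if_pos h1]
      have : H (H t) = t + p := hHH t
      rw [if_neg (by rw [this]; linarith), this]
      ring
    · rw [if_neg h1]
      have hH' : H (H t - p) = H (H t) - p := by
        have := hHper (H t - p)
        rw [sub_add_cancel] at this
        linarith
      rw [hH', hHH t]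
      rw [if_pos (by linarith)]
      ring
  have hrho_free : ∀ t ∈ Zs, rho H c p t ≠ t := by
    intro t ht
    unfold rho
    split
    · exact ne_of_gt (hH1 t)
    · have := hH2 t; intro h; linarith
  have hrho_sg : ∀ t ∈ Zs, sg G (rho H c p t) = sg G t := by
    intro t ht
    obtain ⟨_, htz⟩ := (hZ t).1 ht
    unfold rho
    split
    · exact sg_H hcr hHc hHm hGH htz
    · have h1 : sg G (H t - p) = sg G (H t) := by
        have := sg_per (G := G) hper (t := H t - p)
        rw [sub_add_cancel] at this
        exact this.symm
      rw [h1]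
      exact sg_H hcr hHc hHm hGH htz
  -- the positive-sign zeros are invariant under rho, a free involution
  set P := Zs.filter fun t => sg G t = 1 with hP
  have hPmap : ∀ x ∈ P, rho H c p x ∈ P := by
    intro x hx
    rw [hP, Finset.mem_filter] at hx ⊢
    exact ⟨hrho_mem x hx.1, by rw [hrho_sg x hx.1]; exact hx.2⟩
  have hPinv : ∀ x ∈ P, rho H c p (rho H c p x) = x := by
    intro x hx
    rw [hP, Finset.mem_filter] at hx
    exact hrho_inv x hx.1
  have hPfree : ∀ x ∈ P, rho H c p x ≠ x := by
    intro x hx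
    rw [hP, Finset.mem_filter] at hx
    exact hrho_free x hx.1
  have hPeven : Even P.card := even_card_of_involution P.card P _ rfl hPmap hPinv hPfree
  have hcard := card_eq_two_mul hp hG hper hc hcr hZ
  rcases hPeven with ⟨k, hk⟩
  rw [← hP] at hcard
  omega

end Rho

end SqCore

def thetaC (u : ℂ) : ℝ :=
  if 0 ≤ Complex.arg u then Complex.arg u
  else Complex.arg u + 2 * Real.pi

namespace SqInst

lemma expMap_coe (t : ℝ) : (expMap t : ℂ) = Complex.exp (t * Complex.I) := rfl

lemma continuous_expMap : Continuous expMap := by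
  apply Continuous.subtype_mk
  exact Complex.continuous_exp.comp (by continuity)

lemma expMap_eq_iff {s t : ℝ} : expMap s = expMap t ↔ ∃ n : ℤ, s = t + n * (2 * Real.pi) := by
  rw [Subtype.ext_iff, expMap_coe, expMap_coe, Complex.exp_eq_exp_iff_exists_int]
  constructor
  · rintro ⟨n, hn⟩
    refine ⟨n, ?_⟩
    have h2 : ((s - t - n * (2 * Real.pi) : ℝ) : ℂ) * Complex.I = 0 := by
      push_cast
      linear_combination hn
    rcases mul_eq_zero.1 h2 with h3 | h3
    · have h4 : (s - t - n * (2 * Real.pi) : ℝ) = 0 := by exact_mod_cast h3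
      linarith
    · exact absurd h3 Complex.I_ne_zero
  · rintro ⟨n, hn⟩
    refine ⟨n, ?_⟩
    rw [hn]
    push_cast
    ring

lemma expMap_per (t : ℝ) : expMap (t + 2 * Real.pi) = expMap t :=
  expMap_eq_iff.2 ⟨1, by ring⟩

lemma expMap_eq_self_iff {s t : ℝ} (h : |s - t| < 2 * Real.pi) (he : expMap s = expMap t) :
    s = t := by
  obtain ⟨n, hn⟩ := expMap_eq_iff.1 he
  have hpi : (0:ℝ) < 2 * Real.pi := by positivity
  have h2 : |(n : ℝ)| * (2 * Real.pi) < 2 * Real.pi := by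
    calc |(n : ℝ)| * (2 * Real.pi) = |(n : ℝ) * (2 * Real.pi)| := by
          rw [abs_mul, abs_of_pos hpi]
      _ = |s - t| := by rw [hn]; ring_nf
      _ < 2 * Real.pi := h
  have : |(n : ℝ)| < 1 := by
    by_contra hc
    push_neg at hc
    nlinarith
  have : n = 0 := by
    have := abs_lt.1 this
    have h1 : (-1 : ℝ) < n := this.1
    have h2 : (n : ℝ) < 1 := this.2
    exact_mod_cast by
      have : (-1 : ℤ) < n ∧ n < 1 := ⟨by exact_mod_cast h1, by exact_mod_cast h2⟩
      omega
  rw [this] at hn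
  simpa using hn

lemma expMap_surj (z : S1) : ∃ t, expMap t = z := by
  refine ⟨Complex.arg z, ?_⟩
  have hz : ‖(z : ℂ)‖ = 1 := by
    have := z.2
    simpa [Complex.dist_eq] using this
  apply Subtype.ext
  rw [expMap_coe]
  have := Complex.norm_mul_exp_arg_mul_I (z : ℂ)
  rw [hz] at this
  simpa using this

lemma expMap_surj_window (c : ℝ) (z : S1) : ∃ t ∈ Set.Ico c (c + 2 * Real.pi), expMap t = z := by
  obtain ⟨t0, ht0⟩ := expMap_surj z
  have hpi : (0:ℝ) < 2 * Real.pi := by positivity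
  refine ⟨toIcoMod hpi c t0, toIcoMod_mem_Ico hpi c t0, ?_⟩
  have hmod := self_sub_toIcoMod hpi c t0
  rw [← ht0]
  apply expMap_eq_iff.2
  refine ⟨-(toIcoDiv hpi c t0), ?_⟩
  have : t0 - toIcoMod hpi c t0 = (toIcoDiv hpi c t0 : ℝ) * (2 * Real.pi) := by
    rw [hmod]; simp [zsmul_eq_mul]
  push_cast
  linarith



lemma rect_ne10 {R : Fin 4 → ℂ} (h : IsLabeledRect R) : R 1 ≠ R 0 := h.1

lemma rect_ne20 {R : Fin 4 → ℂ} (h : IsLabeledRect R) : R 2 ≠ R 0 := by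
  obtain ⟨h10, r, hr, h21, h3⟩ := h
  intro hc
  have : R 2 - R 0 = (Complex.I * r + 1) * (R 1 - R 0) := by
    have : R 2 - R 0 = (R 2 - R 1) + (R 1 - R 0) := by ring
    rw [this, h21]; ring
  rw [hc] at this
  simp at this
  rcases this with h | h
  · have := congrArg Complex.re h
    simp [Complex.add_re, Complex.mul_re] at this
  · exact h10 (by linear_combination h)

lemma relabel_relabel (R : Fin 4 → ℂ) : relabel (relabel R) = fun k => R (k + 2) := by
  funext k
  show R (k + 1 + 1) = R (k + 2)
  congr 1
  exact (add_assoc k 1 1).trans rfl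

lemma relabel4 (R : Fin 4 → ℂ) : relabel (relabel (relabel (relabel R))) = R := by
  funext k
  show R (k + 1 + 1 + 1 + 1) = R k
  congr 1
  have : (1 : Fin 4) + 1 + 1 + 1 = 0 := rfl
  rw [show k + 1 + 1 + 1 + 1 = k + (1 + 1 + 1 + 1) by simp only [add_assoc], show (1:Fin 4)+1+1+1 = 0 from rfl,
    add_zero]

lemma aspect_relabel2 {R : Fin 4 → ℂ} (h : IsLabeledRect R) :
    aspect (relabel (relabel R)) = aspect R := by
  obtain ⟨h10, r, hr, h21, h3⟩ := h
  rw [relabel_relabel]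
  unfold aspect
  simp only
  have e20 : (2 : Fin 4) + 2 = 0 := rfl
  have e12 : (1 : Fin 4) + 2 = 3 := rfl
  rw [show ((2:Fin 4) + 2) = 0 from rfl, show ((1:Fin 4) + 2) = 3 from rfl,
    show ((0:Fin 4) + 2) = 2 from rfl]
  have k1 : R 0 - R 3 = -(R 2 - R 1) := by rw [h3]; ring
  have k2 : R 3 - R 2 = -(R 1 - R 0) := by rw [h3]; ring
  rw [k1, k2, norm_neg, norm_neg]

lemma relabel2_ne {R : Fin 4 → ℂ} (h : IsLabeledRect R) :
    relabel (relabel R) ≠ R := by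
  intro hc
  have := congrArg (fun f => f 0) hc
  simp [relabel] at this
  exact rect_ne20 h this



lemma thetaC_exp {u : ℂ} (hu : ‖u‖ = 1) :
    Complex.exp (thetaC u * Complex.I) = u := by
  have habs := Complex.norm_mul_exp_arg_mul_I u
  rw [hu] at habs
  simp only [Complex.ofReal_one, one_mul] at habs
  unfold thetaC
  split
  · exact habs
  · push_cast
    rw [add_mul, Complex.exp_add, habs]
    have h2 : Complex.exp ((2 : ℂ) * Real.pi * Complex.I) = 1 := Complex.exp_two_pi_mul_I
    rw [h2, mul_one]

lemma thetaC_pos {u : ℂ} (hu : ‖u‖ = 1) (hne : u ≠ 1) :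
    0 < thetaC u ∧ thetaC u < 2 * Real.pi := by
  have hpi := Real.pi_pos
  have h1 := Complex.arg_le_pi u
  have h2 := Complex.neg_pi_lt_arg u
  unfold thetaC
  split
  · rename_i h
    refine ⟨lt_of_le_of_ne h ?_, by linarith⟩
    intro hc
    apply hne
    have habs := Complex.norm_mul_exp_arg_mul_I u
    rw [hu, ← hc] at habs
    simpa using habs.symm
  · rename_i h
    push_neg at h
    constructor <;> linarith

lemma thetaC_continuousAt {u : ℂ} (hu : ‖u‖ = 1) (hne : u ≠ 1) :
    ContinuousAt thetaC u := by
  have hu0 : u ≠ 0 := by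
    intro h; rw [h] at hu; simp at hu
  rcases lt_trichotomy u.im 0 with him | him | him
  · -- lower half: arg < 0 locally, thetaC = arg + 2π
    have harg : ContinuousAt Complex.arg u := Complex.continuousAt_arg (by right; exact ne_of_lt him)
    have hev : ∀ᶠ v in nhds u, v.im < 0 := by
      have : ContinuousAt Complex.im u := Complex.continuous_im.continuousAt
      exact this.eventually_lt continuousAt_const him
    apply ContinuousAt.congr ((harg.add continuousAt_const))
    filter_upwards [hev] with v hv
    unfold thetaC
    rw [if_neg]
    · rfl
    push_neg
    exact Complex.arg_neg_iff.2 hv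
  · -- im = 0 : u = -1 (since u ≠ 1, |u| = 1)
    have hure : u = -1 := by
      have hsq := Complex.sq_norm u
      rw [hu, Complex.normSq_apply] at hsq
      rw [him] at hsq
      have h3 : u.re * u.re = 1 := by nlinarith
      have h4 : u.re = 1 ∨ u.re = -1 := by
        rcases mul_self_eq_one_iff.mp h3 with h | h
        · exact Or.inl h
        · exact Or.inr h
      rcases h4 with h | h
      · exfalso; apply hne; apply Complex.ext <;> simp [h, him]
      · apply Complex.ext <;> simp [h, him]
    subst hure
    -- near -1 : thetaC v = π + arg (-v)
    have hev : ∀ᶠ v in nhds (-1 : ℂ), v.re < 0 := by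
      have : ContinuousAt Complex.re (-1 : ℂ) := Complex.continuous_re.continuousAt
      have h1 : ((-1 : ℂ)).re < 0 := by simp
      exact this.eventually_lt continuousAt_const h1
    have hcont : ContinuousAt (fun v => Real.pi + Complex.arg (-v)) (-1 : ℂ) := by
      apply ContinuousAt.add continuousAt_const
      have h1 : ContinuousAt Complex.arg (-(-1 : ℂ)) := by
        rw [neg_neg]
        exact Complex.continuousAt_arg (by left; simp)
      exact ContinuousAt.comp h1 continuousAt_neg
    apply ContinuousAt.congr hcont
    filter_upwards [hev] with v hv
    unfold thetaC
    rcases lt_trichotomy v.im 0 with h | h | h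
    · rw [if_neg (by push_neg; exact Complex.arg_neg_iff.2 h)]
      rw [Complex.arg_neg_eq_arg_add_pi_of_im_neg h]
      ring
    · have hvarg : Complex.arg v = Real.pi := Complex.arg_eq_pi_iff.2 ⟨hv, h⟩
      rw [if_pos (by rw [hvarg]; exact Real.pi_pos.le), hvarg]
      have : Complex.arg (-v) = 0 := by
        rw [Complex.arg_eq_zero_iff]
        constructor
        · simp; linarith
        · simp [h]
      rw [this, add_zero]
    · rw [if_pos (Complex.arg_nonneg_iff.2 (le_of_lt h))]
      rw [Complex.arg_neg_eq_arg_sub_pi_of_im_pos h]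
      ring
  · -- upper half: arg > 0 locally, thetaC = arg
    have harg : ContinuousAt Complex.arg u := Complex.continuousAt_arg (by right; exact ne_of_gt him)
    have hev : ∀ᶠ v in nhds u, 0 < v.im := by
      have : ContinuousAt Complex.im u := Complex.continuous_im.continuousAt
      exact continuousAt_const.eventually_lt this him
    apply ContinuousAt.congr harg
    filter_upwards [hev] with v hv
    unfold thetaC
    rw [if_pos (Complex.arg_nonneg_iff.2 (le_of_lt hv))]



lemma s1_abs (z : S1) : ‖(z : ℂ)‖ = 1 := by
  have := z.2
  simpa [Complex.dist_eq] using this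

lemma s1_ne_zero (z : S1) : (z : ℂ) ≠ 0 := by
  intro h
  have := s1_abs z
  rw [h] at this
  simp at this

lemma continuousAt_aspect {R : Fin 4 → ℂ} (h : R 1 ≠ R 0) : ContinuousAt aspect R := by
  have c1 : Continuous fun R : Fin 4 → ℂ => ‖R 2 - R 1‖ :=
    continuous_norm.comp ((continuous_apply 2).sub (continuous_apply 1))
  have c2 : Continuous fun R : Fin 4 → ℂ => ‖R 1 - R 0‖ :=
    continuous_norm.comp ((continuous_apply 1).sub (continuous_apply 0))
  exact ContinuousAt.div c1.continuousAt c2.continuousAt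
    (norm_ne_zero_iff.2 (sub_ne_zero.2 h))

lemma finite_of_isolated {C : Set ℝ} (hC : IsCompact C)
    (h : ∀ t ∈ C, ∃ ε > 0, ∀ s ∈ C, |s - t| < ε → s = t) : C.Finite := by
  choose! ε hε0 hsep using h
  obtain ⟨t, htC, hcov⟩ := hC.elim_nhds_subcover (fun x => Metric.ball x (ε x))
    (fun x hx => Metric.ball_mem_nhds x (hε0 x hx))
  apply Set.Finite.subset t.finite_toSet
  intro s hs
  obtain ⟨x, hxt, hx⟩ := Set.mem_iUnion₂.1 (hcov hs)
  have : s = x := hsep x (htC x hxt) s hs (by rw [← Real.dist_eq]; exact hx)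
  rw [this]; exact hxt

end SqInst


def Emap {ζ : Set (Fin 4 → ℂ)} (e : S1 ≃ₜ ζ) (t : ℝ) : Fin 4 → ℂ := (e (expMap t) : Fin 4 → ℂ)

def Gmap {ζ : Set (Fin 4 → ℂ)} (e : S1 ≃ₜ ζ) (t : ℝ) : ℝ := aspect (Emap e t)

theorem loop_even_squares (φ : S1 → ℂ) (hφ : IsCCWJordan φ)
    (hpoly : IsPolygon (Set.range φ))
    (ζ : Set (Fin 4 → ℂ))
    (hcomp : ∃ R ∈ inscribed (Set.range φ),
      ζ = connectedComponentIn (inscribed (Set.range φ)) R)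
    (e : S1 ≃ₜ ζ)
    (hloc : ∀ R ∈ ζ, aspect R = 1 →
      ∃ U : Set (Fin 4 → ℂ), IsOpen U ∧ R ∈ U ∧ Set.InjOn aspect (U ∩ ζ)) :
    {R ∈ ζ | aspect R = 1}.Finite ∧ Even {R ∈ ζ | aspect R = 1}.ncard ∧
      (relabel '' (relabel '' ζ) = ζ ∧ relabel '' ζ ≠ ζ →
        4 ∣ {R ∈ ζ | aspect R = 1}.ncard) := by
  classical
  have hpi : (0:ℝ) < 2 * Real.pi := by positivity
  have hpi3 : (3:ℝ) < Real.pi := Real.pi_gt_three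
  -- basic structure
  have hζsub : ζ ⊆ inscribed (Set.range φ) := by
    obtain ⟨R₀, hR₀, hζeq⟩ := hcomp
    rw [hζeq]
    exact connectedComponentIn_subset _ _
  have hLR : ∀ R ∈ ζ, IsLabeledRect R := fun R h => (hζsub h).1
  set E : ℝ → Fin 4 → ℂ := Emap e with hEdef
  set G : ℝ → ℝ := Gmap e with hGdef
  have hEmem : ∀ t, E t ∈ ζ := fun t => (e (expMap t)).2
  have hEcont : Continuous E :=
    continuous_subtype_val.comp (e.continuous.comp SqInst.continuous_expMap)
  have hEper : ∀ t, E (t + 2 * Real.pi) = E t := by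
    intro t
    show Emap e (t + 2 * Real.pi) = Emap e t
    unfold Emap
    rw [SqInst.expMap_per]
  have hEinj : ∀ {s t : ℝ}, E s = E t → expMap s = expMap t := by
    intro s t h
    exact e.injective (Subtype.ext h)
  have hGE : ∀ t, G t = aspect (E t) := fun t => rfl
  have hGcont : Continuous G := by
    rw [continuous_iff_continuousAt]
    intro t
    exact (SqInst.continuousAt_aspect (hLR _ (hEmem t)).1).comp hEcont.continuousAt
  have hGper : ∀ t, G (t + 2 * Real.pi) = G t := by
    intro t
    rw [hGE, hGE, hEper]
  -- local injectivity windows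
  have hdelta : ∀ t, G t = 1 → ∃ δ, 0 < δ ∧ δ ≤ 1 ∧ Set.InjOn G (Set.Icc (t - δ) (t + δ)) := by
    intro t ht
    obtain ⟨U, hUopen, hmemU, hinj⟩ := hloc (E t) (hEmem t) (by rw [← hGE]; exact ht)
    have hnh : E ⁻¹' U ∈ nhds t := hEcont.continuousAt.preimage_mem_nhds (hUopen.mem_nhds hmemU)
    obtain ⟨ε, hε, hball⟩ := Metric.mem_nhds_iff.1 hnh
    refine ⟨min (ε/2) 1, by positivity, min_le_right _ _, ?_⟩
    intro s hs s' hs' hss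
    have hd : ∀ x, x ∈ Set.Icc (t - min (ε/2) 1) (t + min (ε/2) 1) → E x ∈ U := by
      intro x hx
      apply hball
      rw [Metric.mem_ball, Real.dist_eq, abs_sub_lt_iff]
      have h1 := hx.1
      have h2 := hx.2
      have h3 : min (ε/2) 1 ≤ ε / 2 := min_le_left _ _
      constructor <;> linarith
    have hEq : E s = E s' := hinj ⟨hd s hs, hEmem s⟩ ⟨hd s' hs', hEmem s'⟩
      (by rw [← hGE, ← hGE]; exact hss)
    apply SqInst.expMap_eq_self_iff ?_ (hEinj hEq)
    have h1 := hs.1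
    have h2 := hs.2
    have h3 := hs'.1
    have h4 := hs'.2
    have h5 : min (ε/2) 1 ≤ 1 := min_le_right _ _
    rw [abs_sub_lt_iff]
    constructor <;> linarith
  -- crossings
  have hcr : ∀ t, G t = 1 → SqCore.Crossing G t := by
    intro t ht
    obtain ⟨δ, hδ, hδ1, hinj⟩ := hdelta t ht
    have hab : t - δ ≤ t + δ := by linarith
    have htt : t ∈ Set.Icc (t - δ) (t + δ) := ⟨by linarith, by linarith⟩
    rcases ContinuousOn.strictMonoOn_of_injOn_Icc' hab hGcont.continuousOn hinj with hm | hm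
    · left
      constructor
      · refine ⟨δ, hδ, fun s hs => ?_⟩
        have := hm htt (Set.mem_Icc.mpr ⟨by linarith [hs.1, hs.2], by linarith [hs.2]⟩) hs.1
        rwa [ht] at this
      · refine ⟨δ, hδ, fun s hs => ?_⟩
        have := hm (Set.mem_Icc.mpr ⟨hs.1, by linarith [hs.1, hs.2]⟩) htt hs.2
        rwa [ht] at this
    · right
      constructor
      · refine ⟨δ, hδ, fun s hs => ?_⟩
        have := hm htt (Set.mem_Icc.mpr ⟨by linarith [hs.1, hs.2], by linarith [hs.2]⟩) hs.1
        rwa [ht] at this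
      · refine ⟨δ, hδ, fun s hs => ?_⟩
        have := hm (Set.mem_Icc.mpr ⟨hs.1, by linarith [hs.1, hs.2]⟩) htt hs.2
        rwa [ht] at this
  -- finiteness of zeros in a compact window
  have hZC : {t ∈ Set.Icc (0:ℝ) (2 * Real.pi) | G t = 1}.Finite := by
    have hCeq : {t ∈ Set.Icc (0:ℝ) (2 * Real.pi) | G t = 1}
        = Set.Icc (0:ℝ) (2 * Real.pi) ∩ G ⁻¹' {1} := by
      ext x
      simp [Set.mem_sep_iff, Set.mem_inter_iff]
    rw [hCeq]
    apply SqInst.finite_of_isolated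
      (isCompact_Icc.inter_right (isClosed_singleton.preimage hGcont))
    intro t htC
    have htz : G t = 1 := htC.2
    obtain ⟨δ, hδ, _, hinj⟩ := hdelta t htz
    refine ⟨δ, hδ, fun s hsC hst => ?_⟩
    have h1 := abs_sub_lt_iff.1 hst
    exact hinj ⟨by linarith [h1.1, h1.2], by linarith [h1.1, h1.2]⟩
      ⟨by linarith, by linarith⟩ (by rw [hsC.2, htz])
  -- the image description of squares
  have hFimg : ∀ c : ℝ, {R ∈ ζ | aspect R = 1}
      = E '' {t ∈ Set.Ico c (c + 2 * Real.pi) | G t = 1} := by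
    intro c
    ext R
    constructor
    · rintro ⟨hRζ, hR1⟩
      obtain ⟨t, htw, hte⟩ := SqInst.expMap_surj_window c (e.symm ⟨R, hRζ⟩)
      have hER : E t = R := by
        show (e (expMap t) : Fin 4 → ℂ) = R
        rw [hte, e.apply_symm_apply]
      exact ⟨t, ⟨htw, by rw [hGE, hER]; exact hR1⟩, hER⟩
    · rintro ⟨t, ⟨htw, htz⟩, rfl⟩
      exact ⟨hEmem t, by rw [← hGE]; exact htz⟩
  have hEinjW : ∀ c : ℝ, Set.InjOn E {t ∈ Set.Ico c (c + 2 * Real.pi) | G t = 1} := by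
    intro c s hs t ht hst
    apply SqInst.expMap_eq_self_iff ?_ (hEinj hst)
    obtain ⟨⟨h1, h2⟩, _⟩ := hs
    obtain ⟨⟨h3, h4⟩, _⟩ := ht
    rw [abs_sub_lt_iff]
    constructor <;> linarith
  have hFfin : {R ∈ ζ | aspect R = 1}.Finite := by
    rw [hFimg 0]
    apply Set.Finite.image
    apply hZC.subset
    rintro t ⟨⟨h1, h2⟩, h3⟩
    exact ⟨⟨h1, by linarith⟩, h3⟩
  -- choose a non-zero base point c
  have hZ0fin : {t ∈ Set.Ico (0:ℝ) (0 + 2 * Real.pi) | G t = 1}.Finite := by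
    apply hZC.subset
    rintro t ⟨⟨h1, h2⟩, h3⟩
    exact ⟨⟨h1, by linarith⟩, h3⟩
  obtain ⟨c, hcmem⟩ :=
    ((Set.Ico_infinite (by linarith : (0:ℝ) < 0 + 2 * Real.pi)).diff hZ0fin).nonempty
  have hc : G c ≠ 1 := by
    intro h
    exact hcmem.2 ⟨hcmem.1, h⟩
  -- the window zero set
  have hZwfin : {t ∈ Set.Ico c (c + 2 * Real.pi) | G t = 1}.Finite := by
    apply Set.Finite.of_finite_image _ (hEinjW c)
    rw [← hFimg c]
    exact hFfin
  set Zs : Finset ℝ := hZwfin.toFinset with hZsdef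
  have hZsmem : ∀ t, t ∈ Zs ↔ t ∈ Set.Ico c (c + 2 * Real.pi) ∧ G t = 1 := by
    intro t
    rw [hZsdef, Set.Finite.mem_toFinset]
    rfl
  have hcard : {R ∈ ζ | aspect R = 1}.ncard = Zs.card := by
    rw [hFimg c, Set.ncard_image_of_injOn (hEinjW c),
      Set.ncard_eq_toFinset_card _ hZwfin]
  refine ⟨hFfin, ?_, ?_⟩
  · rw [hcard]
    exact SqCore.even_card hpi hGcont hGper hc hcr hZsmem
  -- Part C
  rintro ⟨hψ2, -⟩
  rw [hcard]
  have hrζ : ∀ R ∈ ζ, relabel (relabel R) ∈ ζ := by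
    intro R hR
    have : relabel (relabel R) ∈ relabel '' (relabel '' ζ) :=
      Set.mem_image_of_mem _ (Set.mem_image_of_mem _ hR)
    rwa [hψ2] at this
  have hrcont : Continuous fun R : Fin 4 → ℂ => relabel (relabel R) := by
    apply continuous_pi
    intro k
    exact continuous_apply _
  -- the circle map w
  obtain ⟨w, hwcont, hwE⟩ : ∃ w : ℝ → S1, Continuous w ∧
      ∀ t, ((e (w t) : Fin 4 → ℂ)) = relabel (relabel (E t)) := by
    refine ⟨fun t => e.symm ⟨relabel (relabel (E t)), hrζ _ (hEmem t)⟩, ?_, ?_⟩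
    · exact e.symm.continuous.comp (Continuous.subtype_mk (hrcont.comp hEcont) _)
    · intro t
      rw [e.apply_symm_apply]
  have hwne : ∀ t, (w t : ℂ) ≠ (expMap t : ℂ) := by
    intro t heq
    have h1 : w t = expMap t := Subtype.ext heq
    have h2 := hwE t
    rw [h1] at h2
    exact SqInst.relabel2_ne (hLR _ (hEmem t)) h2.symm
  -- the lifted map H
  obtain ⟨H, hHcont, hHexp, hH1, hH2⟩ : ∃ H : ℝ → ℝ, Continuous H ∧
      (∀ t, expMap (H t) = w t) ∧ (∀ t, t < H t) ∧ (∀ t, H t < t + 2 * Real.pi) := by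
    have huabs : ∀ t, ‖(w t : ℂ) / (expMap t : ℂ)‖ = 1 := by
      intro t
      rw [norm_div, SqInst.s1_abs, SqInst.s1_abs]
      norm_num
    have hune : ∀ t, ((w t : ℂ) / (expMap t : ℂ)) ≠ 1 := by
      intro t h
      rw [div_eq_one_iff_eq (SqInst.s1_ne_zero (expMap t))] at h
      exact hwne t h
    refine ⟨fun t => t + thetaC ((w t : ℂ) / (expMap t : ℂ)), ?_, ?_, ?_, ?_⟩
    · rw [continuous_iff_continuousAt]
      intro t
      apply ContinuousAt.add continuousAt_id
      have hu_cont : ContinuousAt (fun t => (w t : ℂ) / (expMap t : ℂ)) t := by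
        apply ContinuousAt.div
        · exact (continuous_subtype_val.comp hwcont).continuousAt
        · exact (continuous_subtype_val.comp SqInst.continuous_expMap).continuousAt
        · exact SqInst.s1_ne_zero _
      show ContinuousAt (thetaC ∘ fun t => (w t : ℂ) / (expMap t : ℂ)) t
      exact ContinuousAt.comp (SqInst.thetaC_continuousAt (huabs t) (hune t)) hu_cont
    · intro t
      apply Subtype.ext
      rw [SqInst.expMap_coe]
      have hsplit : ((t + thetaC ((w t : ℂ) / (expMap t : ℂ)) : ℝ) : ℂ) * Complex.I
          = (t : ℂ) * Complex.I + (thetaC ((w t : ℂ) / (expMap t : ℂ)) : ℂ) * Complex.I := by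
        push_cast
        ring
      rw [hsplit, Complex.exp_add, SqInst.thetaC_exp (huabs t)]
      rw [show Complex.exp ((t:ℂ) * Complex.I) = (expMap t : ℂ) from rfl]
      rw [mul_comm, div_mul_cancel₀ _ (SqInst.s1_ne_zero (expMap t))]
    · intro t
      have := (SqInst.thetaC_pos (huabs t) (hune t)).1
      linarith
    · intro t
      have := (SqInst.thetaC_pos (huabs t) (hune t)).2
      linarith
  -- properties of H
  have hwinj : ∀ {s t : ℝ}, w s = w t → expMap s = expMap t := by
    intro s t h
    have h1 : ((e (w s) : Fin 4 → ℂ)) = ((e (w t) : Fin 4 → ℂ)) := by rw [h]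
    rw [hwE, hwE] at h1
    have h2 : E s = E t := by
      have := congrArg (fun R => relabel (relabel R)) h1
      simpa only [SqInst.relabel4] using this
    exact hEinj h2
  have hwper : ∀ t, w (t + 2 * Real.pi) = w t := by
    intro t
    apply e.injective
    apply Subtype.ext
    rw [hwE, hwE, hEper]
  have hEH : ∀ t, E (H t) = relabel (relabel (E t)) := by
    intro t
    show (e (expMap (H t)) : Fin 4 → ℂ) = _
    rw [hHexp t]
    exact hwE t
  have hGH : ∀ t, G (H t) = G t := by
    intro t
    rw [hGE, hGE, hEH t]
    exact SqInst.aspect_relabel2 (hLR _ (hEmem t))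
  have hHper : ∀ t, H (t + 2 * Real.pi) = H t + 2 * Real.pi := by
    intro t
    have h1 : expMap (H (t + 2 * Real.pi)) = expMap (H t + 2 * Real.pi) := by
      rw [hHexp, hwper, SqInst.expMap_per, hHexp]
    obtain ⟨n, hn⟩ := SqInst.expMap_eq_iff.1 h1
    have hb1 : t + 2 * Real.pi < H (t + 2 * Real.pi) := hH1 _
    have hb2 : H (t + 2 * Real.pi) < t + 2 * Real.pi + 2 * Real.pi := hH2 _
    have hb3 : t + 2 * Real.pi < H t + 2 * Real.pi := by linarith [hH1 t]
    have hb4 : H t + 2 * Real.pi < t + 2 * Real.pi + 2 * Real.pi := by linarith [hH2 t]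
    have hn0 : |(n : ℝ)| < 1 := by
      rw [abs_lt]
      constructor <;> nlinarith [hn]
    have hn1 : n = 0 := by
      obtain ⟨hl, hr⟩ := abs_lt.1 hn0
      have h7 : (-1:ℤ) < n := by exact_mod_cast hl
      have h8 : (n:ℤ) < 1 := by exact_mod_cast hr
      omega
    rw [hn1] at hn
    simpa using hn
  have hwH : ∀ t, w (H t) = expMap t := by
    intro t
    apply e.injective
    apply Subtype.ext
    rw [hwE]
    show _ = (e (expMap t) : Fin 4 → ℂ)
    rw [hEH t, SqInst.relabel4]
    rfl
  have hHH : ∀ t, H (H t) = t + 2 * Real.pi := by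
    intro t
    have h1 : expMap (H (H t)) = expMap t := by rw [hHexp, hwH]
    obtain ⟨n, hn⟩ := SqInst.expMap_eq_iff.1 h1
    have hb1 : t < H (H t) := lt_trans (hH1 t) (hH1 (H t))
    have hb2 : H (H t) < t + 2 * (2 * Real.pi) := by
      have h3 := hH2 (H t)
      have h4 := hH2 t
      linarith
    have hn1 : n = 1 := by
      have hlow : (0:ℝ) < n * (2 * Real.pi) := by nlinarith [hn]
      have hhigh : (n:ℝ) * (2 * Real.pi) < 2 * (2 * Real.pi) := by nlinarith [hn]
      have h5 : (0:ℝ) < (n:ℝ) := by nlinarith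
      have h6 : (n:ℝ) < 2 := by nlinarith
      have h7 : (0:ℤ) < n := by exact_mod_cast h5
      have h8 : (n:ℤ) < 2 := by exact_mod_cast h6
      omega
    rw [hn1] at hn
    rw [hn]
    push_cast
    ring
  have hHinjmod : ∀ s s' : ℝ, H s = H s' → expMap s = expMap s' := by
    intro s s' h
    have h1 : expMap (H s) = expMap (H s') := by rw [h]
    rw [hHexp, hHexp] at h1
    exact hwinj h1
  have hmono4 : ∀ x : ℝ, StrictMonoOn H (Set.Icc x (x + 4)) := by
    have key : ∀ x : ℝ, StrictMonoOn H (Set.Icc x (x + 4))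
        ∨ StrictAntiOn H (Set.Icc x (x + 4)) := by
      intro x
      apply ContinuousOn.strictMonoOn_of_injOn_Icc' (by linarith) hHcont.continuousOn
      intro s hs s' hs' hss
      apply SqInst.expMap_eq_self_iff ?_ (hHinjmod _ _ hss)
      obtain ⟨h1, h2⟩ := hs
      obtain ⟨h3, h4⟩ := hs'
      rw [abs_sub_lt_iff]
      constructor <;> linarith
    intro x
    rcases key x with h | h
    · exact h
    · exfalso
      rcases key (x + 3) with h2 | h2
      · have ha : H (x + 3.5) < H (x + 3) :=
          h ⟨by linarith, by linarith⟩ ⟨by linarith, by linarith⟩ (by linarith)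
        have hb : H (x + 3) < H (x + 3.5) :=
          h2 ⟨by linarith, by linarith⟩ ⟨by linarith, by linarith⟩ (by linarith)
        linarith
      · have hpi315 : Real.pi < 3.15 := Real.pi_lt_d2
        have ha : H (x + 3.5) < H x :=
          h ⟨by linarith, by linarith⟩ ⟨by linarith, by linarith⟩ (by linarith)
        have hb : H (x + 2 * Real.pi) < H (x + 3.5) :=
          h2 ⟨by linarith, by linarith⟩ ⟨by linarith, by linarith⟩ (by linarith)
        have hc2 : H (x + 2 * Real.pi) = H x + 2 * Real.pi := hHper x
        linarith
  have hHmono : StrictMono H := by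
    have step : ∀ n : ℕ, ∀ s t : ℝ, s < t → t ≤ s + ((n : ℝ) + 1) → H s < H t := by
      intro n
      induction n with
      | zero =>
        intro s t h1 h2
        push_cast at h2
        exact hmono4 s ⟨le_refl s, by linarith⟩ ⟨by linarith, by linarith⟩ h1
      | succ m ih =>
        intro s t h1 h2
        by_cases hcase : t ≤ s + ((m : ℝ) + 1)
        · exact ih s t h1 hcase
        · push_neg at hcase
          have hA : H s < H (s + ((m : ℝ) + 1)) :=
            ih s (s + ((m : ℝ) + 1))
              (by have : (0:ℝ) ≤ (m:ℝ) := Nat.cast_nonneg m; linarith) (le_refl _)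
          have hB : H (s + ((m : ℝ) + 1)) < H t := by
            apply hmono4 (s + ((m : ℝ) + 1)) ⟨le_refl _, by linarith⟩
              ⟨by linarith, by push_cast at h2; linarith⟩ hcase
          linarith
    intro s t hst
    have hle : t ≤ s + ((⌈t - s⌉₊ : ℝ) + 1) := by
      have := Nat.le_ceil (t - s)
      linarith
    exact step ⌈t - s⌉₊ s t hst hle
  exact SqCore.four_dvd_card hpi hGcont hGper hc hcr hZsmem hHcont hHmono hGH hH1 hH2 hHH hHper
end
end
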